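/- arXiv:2012.08683 — 8 statements merged into one kernel-verified Lean document; each statement's English description precedes it below -/
import Mathlib

section
/- Let p be an odd prime, q = p^r, and let X be the smooth projective curve over F_q given by f(x,y) = a x^{q-1} + b y^{q-1} + 1 = 0 with ab ≠ 0. For 0 ≤ i, j with i + j ≤ q − 4, the differential ω_{i,j} = x^i y^j y^{-(q-2)} dx is an eigenvector of the r-th power of the Cartier operator with eigenvalue α_{i+1,j+1} a^{i+1} b^{j+1}, where α_{m,n} = (q−1)!/(m! n! (q−1−m−n)!). -/
open MvPolynomial

/-- The Hasse derivative of order `n` with respect to the variable `v` on polynomials in two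
variables: it sends the monomial `X^d` to `(d v).choose n • X^(d - n·v)`. -/
noncomputable def mvHasseDeriv {F : Type*} [CommRing F] (v : Fin 2) (n : ℕ)
    (P : MvPolynomial (Fin 2) F) : MvPolynomial (Fin 2) F :=
  P.support.sum fun d =>
    monomial (d - Finsupp.single v n) (((d v).choose n : F) * coeff d P)

/-- The multinomial coefficient `α_{m,n} = (q-1)! / (m! n! (q-1-m-n)!)`. -/
def alphaCoeff (q m n : ℕ) : ℕ :=
  (q - 1).factorial / (m.factorial * n.factorial * (q - 1 - m - n).factorial)

lemma mvHasseDeriv_eq_sum {F : Type*} [CommRing F] (v : Fin 2) (n : ℕ)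
    (P : MvPolynomial (Fin 2) F) :
    mvHasseDeriv v n P
      = Finsupp.sum (AddMonoidAlgebra.coeff P) (fun d c => monomial (d - Finsupp.single v n) (((d v).choose n : F) * c)) :=
  rfl

lemma mvHasseDeriv_monomial {F : Type*} [CommRing F] (v : Fin 2) (n : ℕ)
    (d : Fin 2 →₀ ℕ) (c : F) :
    mvHasseDeriv v n (monomial d c)
      = monomial (d - Finsupp.single v n) (((d v).choose n : F) * c) := by
  classical
  rcases eq_or_ne c 0 with rfl | hc
  · simp [mvHasseDeriv]
  · rw [mvHasseDeriv, support_monomial, if_neg hc, Finset.sum_singleton, coeff_monomial,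
      if_pos rfl]

lemma mvHasseDeriv_add {F : Type*} [CommRing F] (v : Fin 2) (n : ℕ)
    (P R : MvPolynomial (Fin 2) F) :
    mvHasseDeriv v n (P + R) = mvHasseDeriv v n P + mvHasseDeriv v n R := by
  rw [mvHasseDeriv_eq_sum, mvHasseDeriv_eq_sum, mvHasseDeriv_eq_sum, AddMonoidAlgebra.coeff_add]
  exact Finsupp.sum_add_index' (fun d => by simp) (fun d c1 c2 => by rw [mul_add, map_add])

lemma mvHasseDeriv_sum {F : Type*} [CommRing F] (v : Fin 2) (n : ℕ) {ι : Type*}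
    (s : Finset ι) (f : ι → MvPolynomial (Fin 2) F) :
    mvHasseDeriv v n (∑ x ∈ s, f x) = ∑ x ∈ s, mvHasseDeriv v n (f x) :=
  map_sum (AddMonoidHom.mk' (mvHasseDeriv v n) (mvHasseDeriv_add v n)) f s

lemma fin2_app1 {A B : ℕ} : ((Finsupp.single (0 : Fin 2) A + Finsupp.single 1 B : Fin 2 →₀ ℕ)) 1 = B := by
  simp [Finsupp.single_apply]

lemma fin2_app0 {A B : ℕ} : ((Finsupp.single (0 : Fin 2) A + Finsupp.single 1 B : Fin 2 →₀ ℕ)) 0 = A := by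
  simp [Finsupp.single_apply]

lemma fin2_sub1 (A B n : ℕ) :
    (Finsupp.single (0 : Fin 2) A + Finsupp.single 1 B) - Finsupp.single 1 n
      = Finsupp.single 0 A + Finsupp.single 1 (B - n) := by
  ext x
  fin_cases x <;> simp [Finsupp.single_apply]

lemma fin2_sub0 (A B n : ℕ) :
    (Finsupp.single (0 : Fin 2) A + Finsupp.single 1 B) - Finsupp.single 0 n
      = Finsupp.single 0 (A - n) + Finsupp.single 1 B := by
  ext x
  fin_cases x <;> simp [Finsupp.single_apply]

lemma monomial_eq' {F : Type*} [CommRing F] (c : F) (e0 e1 : ℕ) :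
    (monomial (Finsupp.single (0 : Fin 2) e0 + Finsupp.single 1 e1) c : MvPolynomial (Fin 2) F)
      = C c * X 0 ^ e0 * X 1 ^ e1 := by
  rw [C_apply, X_pow_eq_monomial, X_pow_eq_monomial, monomial_mul, monomial_mul]
  simp

lemma choose_pred_pow_modeq (p : ℕ) (hp : p.Prime) :
    ∀ r N : ℕ, N.choose (p ^ r - 1) ≡ (if N % p ^ r = p ^ r - 1 then 1 else 0) [MOD p] := by
  intro r
  induction r with
  | zero => intro N; simpa [Nat.mod_one] using Nat.ModEq.refl 1
  | succ r ih =>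
    intro N
    haveI : Fact p.Prime := ⟨hp⟩
    have hp2 : 2 ≤ p := hp.two_le
    have hppos : 0 < p ^ r := pow_pos (by omega) r
    obtain ⟨P, hP⟩ : ∃ P, p ^ r = P + 1 := ⟨p ^ r - 1, by omega⟩
    have hpow : p ^ (r + 1) = p * p ^ r := by rw [pow_succ, mul_comm]
    have hsplit : p ^ (r + 1) - 1 = p * P + (p - 1) := by
      rw [hpow, hP, mul_add, mul_one]; omega
    have hmod : (p ^ (r + 1) - 1) % p = p - 1 := by
      rw [hsplit, Nat.mul_add_mod, Nat.mod_eq_of_lt (by omega)]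
    have hdiv : (p ^ (r + 1) - 1) / p = p ^ r - 1 := by
      rw [hsplit, Nat.mul_add_div (by omega), Nat.div_eq_of_lt (by omega), hP]; omega
    have lucas := Choose.choose_modEq_choose_mod_mul_choose_div_nat
      (p := p) (n := N) (k := p ^ (r + 1) - 1)
    rw [hmod, hdiv] at lucas
    have hfirst : (N % p).choose (p - 1) = if N % p = p - 1 then 1 else 0 := by
      split_ifs with h
      · rw [h, Nat.choose_self]
      · exact Nat.choose_eq_zero_of_lt (by
          have := Nat.mod_lt N (show 0 < p by omega); omega)
    have hNmod : N % p ^ (r + 1) = p * (N / p % p ^ r) + N % p := by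
      rw [hpow]
      conv_lhs => rw [← Nat.div_add_mod (N % (p * p ^ r)) p]
      rw [Nat.mod_mod_of_dvd _ ⟨p ^ r, rfl⟩, Nat.mod_mul_right_div_self]
    have hiff : (N % p ^ (r + 1) = p ^ (r + 1) - 1)
        ↔ (N % p = p - 1 ∧ N / p % p ^ r = p ^ r - 1) := by
      rw [hNmod, hsplit]
      constructor
      · intro h
        have h1 : N % p = p - 1 := by
          have h2 := congrArg (· % p) h
          simpa [Nat.mul_add_mod, Nat.mod_eq_of_lt (show N % p < p from Nat.mod_lt _ (by omega)),
            Nat.mod_eq_of_lt (show p - 1 < p by omega)] using h2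
        rw [h1] at h
        have h3 : p * (N / p % p ^ r) = p * P := Nat.add_right_cancel h
        have h4 : N / p % p ^ r = P := Nat.eq_of_mul_eq_mul_left (by omega) h3
        exact ⟨h1, by omega⟩
      · rintro ⟨h1, h2⟩
        rw [h1, h2, hP, Nat.add_sub_cancel]
    calc N.choose (p ^ (r + 1) - 1)
        ≡ (N % p).choose (p - 1) * (N / p).choose (p ^ r - 1) [MOD p] := lucas
      _ ≡ (if N % p = p - 1 then 1 else 0) * (if N / p % p ^ r = p ^ r - 1 then 1 else 0)
          [MOD p] := by rw [hfirst]; exact Nat.ModEq.mul_left _ (ih (N / p))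
      _ = (if N % p ^ (r + 1) = p ^ (r + 1) - 1 then 1 else 0) := by
          by_cases h1 : N % p = p - 1 <;> by_cases h2 : N / p % p ^ r = p ^ r - 1 <;>
            simp [h1, h2, hiff]

/-- Let `q = p^r` with `p` odd, and `X` the smooth projective curve
`f(x,y) = a x^{q-1} + b y^{q-1} + 1 = 0` over `F_q` with `ab ≠ 0`.  For `0 ≤ i, j` with
`i + j ≤ q - 4`, the regular differential `ω_{i,j} = x^i y^j y^{-(q-2)} dx` is an eigenvector of
the `r`-th power of the Cartier operator with eigenvalue `α_{i+1,j+1} a^{i+1} b^{j+1}`.  By the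
Stöhr–Voloch formula `𝒞^r (h f_y⁻¹ dx) = ((∂/∂x)^{(q-1)} (∂/∂y)^{(q-1)} (f^{q-1} h))^{1/q} f_y⁻¹ dx`,
this is equivalent to the polynomial identity
`(∂/∂x)^{(q-1)} (∂/∂y)^{(q-1)} (f^{q-1} x^i y^j) = (α_{i+1,j+1} a^{i+1} b^{j+1} x^i y^j)^q`
(recall `c^q = c` for `c ∈ F_q`). -/
theorem stmt3 (p r q : ℕ) (hp : p.Prime) (hodd : Odd p) (hq : q = p ^ r) (hr : 1 ≤ r)
    (F : Type*) [Field F] [Fintype F] (hcard : Fintype.card F = q)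
    (a b : F) (ha : a ≠ 0) (hb : b ≠ 0)
    (i j : ℕ) (hij : i + j + 4 ≤ q) :
    mvHasseDeriv 0 (q - 1) (mvHasseDeriv 1 (q - 1)
        ((C a * X 0 ^ (q - 1) + C b * X 1 ^ (q - 1) + 1) ^ (q - 1) * X 0 ^ i * X 1 ^ j)) =
      (C ((alphaCoeff q (i + 1) (j + 1) : F) * a ^ (i + 1) * b ^ (j + 1))
          * X 0 ^ i * X 1 ^ j) ^ q := by
  classical
  have hq4 : 4 ≤ q := by omega
  obtain ⟨Q, rfl⟩ : ∃ Q, q = Q + 1 := ⟨q - 1, by omega⟩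
  simp only [Nat.add_sub_cancel]
  haveI : Fact p.Prime := ⟨hp⟩
  -- char p
  haveI hFp : CharP F p := by
    haveI : CharP F (ringChar F) := ringChar.charP F
    obtain ⟨n, hcp, hcn⟩ := FiniteField.card F (ringChar F)
    have hdvd : ringChar F ∣ p ^ r := by
      rw [← hq, ← hcard, hcn]
      exact dvd_pow_self _ n.ne_zero
    have heq : ringChar F = p :=
      (Nat.prime_dvd_prime_iff_eq hcp hp).mp (hcp.dvd_of_dvd_pow hdvd)
    rw [← heq]
    exact ringChar.charP F
  -- indicator form of the binomial coefficients
  have hchoose : ∀ N : ℕ, ((N.choose Q : ℕ) : F) = if N % (Q + 1) = Q then 1 else 0 := by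
    intro N
    have h := choose_pred_pow_modeq p hp r N
    rw [← hq] at h
    simp only [Nat.add_sub_cancel] at h
    rw [CharP.natCast_eq_natCast' F p h, apply_ite (Nat.cast : ℕ → F), Nat.cast_one,
      Nat.cast_zero]
  have hind : ∀ n t : ℕ, n ≤ Q → t + 4 ≤ Q + 1 →
      (((Q * n + t).choose Q : ℕ) : F) = if n = t + 1 then 1 else 0 := by
    intro n t hn ht
    rw [hchoose]
    have hiff : ((Q * n + t) % (Q + 1) = Q) ↔ (n = t + 1) := by
      rcases le_or_gt n t with hnt | hnt
      · have he : Q * n + t = (Q + 1) * n + (t - n) := by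
          rw [add_mul, one_mul]
          generalize Q * n = A
          omega
        rw [he, Nat.mul_add_mod, Nat.mod_eq_of_lt (by omega)]
        omega
      · obtain ⟨n', rfl⟩ : ∃ n', n = n' + 1 := ⟨n - 1, by omega⟩
        have he : Q * (n' + 1) + t = (Q + 1) * n' + (Q + t - n') := by
          rw [mul_add, mul_one, add_mul, one_mul]
          generalize Q * n' = A
          omega
        rw [he, Nat.mul_add_mod, Nat.mod_eq_of_lt (by omega)]
        omega
    simp only [hiff]
  -- expansion of the trinomial power
  have expand : ((C a * X 0 ^ Q + C b * X 1 ^ Q + 1 : MvPolynomial (Fin 2) F) ^ Q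
        * X 0 ^ i * X 1 ^ j)
      = ∑ k ∈ Finset.range (Q + 1), ∑ m ∈ Finset.range (k + 1),
          monomial (Finsupp.single 0 (Q * m + i) + Finsupp.single 1 (Q * (k - m) + j))
            ((Q.choose k : F) * (k.choose m : F) * (a ^ m * b ^ (k - m))) := by
    rw [add_pow, Finset.sum_mul, Finset.sum_mul]
    refine Finset.sum_congr rfl fun k hk => ?_
    rw [one_pow, mul_one, add_pow, Finset.sum_mul, Finset.sum_mul, Finset.sum_mul]
    refine Finset.sum_congr rfl fun m hm => ?_
    rw [monomial_eq']
    simp only [C_mul, C_pow, map_natCast]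
    ring
  -- action of the two Hasse derivatives on a monomial
  have deriv_term : ∀ (A B : ℕ) (c : F),
      mvHasseDeriv 0 Q (mvHasseDeriv 1 Q
        (monomial (Finsupp.single 0 A + Finsupp.single 1 B) c))
      = monomial (Finsupp.single 0 (A - Q) + Finsupp.single 1 (B - Q))
          ((A.choose Q : F) * ((B.choose Q : F) * c)) := by
    intro A B c
    rw [mvHasseDeriv_monomial, fin2_app1, fin2_sub1, mvHasseDeriv_monomial, fin2_app0, fin2_sub0]
  -- collapsing the double sum
  have collapse : ∀ f : ℕ → ℕ → MvPolynomial (Fin 2) F,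
      (∀ k m, m ≤ k → k ≤ Q → ¬(k = i + j + 2 ∧ m = i + 1) → f k m = 0) →
      (∑ k ∈ Finset.range (Q + 1), ∑ m ∈ Finset.range (k + 1), f k m)
        = f (i + j + 2) (i + 1) := by
    intro f hf
    have h1 : ∀ k ∈ Finset.range (Q + 1), k ≠ i + j + 2 →
        (∑ m ∈ Finset.range (k + 1), f k m) = 0 := by
      intro k hk hne
      exact Finset.sum_eq_zero fun m hm =>
        hf k m (Nat.lt_succ_iff.mp (Finset.mem_range.mp hm))
          (Nat.lt_succ_iff.mp (Finset.mem_range.mp hk)) (fun h => hne h.1)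
    have h2 : ∀ m ∈ Finset.range (i + j + 2 + 1), m ≠ i + 1 → f (i + j + 2) m = 0 := by
      intro m hm hne
      exact hf _ _ (Nat.lt_succ_iff.mp (Finset.mem_range.mp hm)) (by omega) (fun h => hne h.2)
    rw [Finset.sum_eq_single_of_mem (i + j + 2) (Finset.mem_range.mpr (by omega)) h1,
      Finset.sum_eq_single_of_mem (i + 1) (Finset.mem_range.mpr (by omega)) h2]
  -- the right-hand side as a monomial
  have hpowc : ((alphaCoeff (Q + 1) (i + 1) (j + 1) : F) * a ^ (i + 1) * b ^ (j + 1)) ^ (Q + 1)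
      = (alphaCoeff (Q + 1) (i + 1) (j + 1) : F) * a ^ (i + 1) * b ^ (j + 1) := by
    rw [← hcard]; exact FiniteField.pow_card _
  have hRHS : ((C ((alphaCoeff (Q + 1) (i + 1) (j + 1) : F) * a ^ (i + 1) * b ^ (j + 1))
        * X 0 ^ i * X 1 ^ j : MvPolynomial (Fin 2) F)) ^ (Q + 1)
      = monomial (Finsupp.single 0 (i * (Q + 1)) + Finsupp.single 1 (j * (Q + 1)))
          ((alphaCoeff (Q + 1) (i + 1) (j + 1) : F) * a ^ (i + 1) * b ^ (j + 1)) := by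
    rw [monomial_eq', mul_pow, mul_pow, ← C_pow, ← pow_mul, ← pow_mul, hpowc]
  -- the multinomial coefficient identity
  have halpha : alphaCoeff (Q + 1) (i + 1) (j + 1)
      = Q.choose (i + j + 2) * (i + j + 2).choose (i + 1) := by
    have hK : i + j + 2 ≤ Q := by omega
    have f1 := Nat.choose_mul_factorial_mul_factorial hK
    have f2 := Nat.choose_mul_factorial_mul_factorial (show i + 1 ≤ i + j + 2 by omega)
    rw [show i + j + 2 - (i + 1) = j + 1 from by omega] at f2
    have key : Q.factorial = (Q.choose (i + j + 2) * (i + j + 2).choose (i + 1))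
        * ((i + 1).factorial * (j + 1).factorial * (Q - (i + j + 2)).factorial) := by
      rw [← f1, ← f2]; ring
    have hpos : 0 < (i + 1).factorial * (j + 1).factorial * (Q - (i + j + 2)).factorial :=
      Nat.mul_pos (Nat.mul_pos (Nat.factorial_pos _) (Nat.factorial_pos _)) (Nat.factorial_pos _)
    rw [alphaCoeff, Nat.add_sub_cancel,
      show Q - (i + 1) - (j + 1) = Q - (i + j + 2) from by omega, key,
      Nat.mul_div_cancel _ hpos]
  -- main computation
  rw [expand]
  simp only [mvHasseDeriv_sum, deriv_term]
  refine (collapse _ ?_).trans ?_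
  · intro k m hm hk hne
    rw [hind m i (le_trans hm hk) (by omega), hind (k - m) j (by omega) (by omega)]
    by_cases h1 : m = i + 1
    · have h2 : ¬(k - m = j + 1) := by omega
      simp [h2]
    · simp [h1]
  · rw [show i + j + 2 - (i + 1) = j + 1 from by omega,
      hind (i + 1) i (by omega) (by omega), hind (j + 1) j (by omega) (by omega),
      if_pos rfl, if_pos rfl, one_mul, one_mul,
      show Q * (i + 1) + i - Q = i * (Q + 1) from by
        rw [show Q * (i + 1) = Q * i + Q from by ring, show i * (Q + 1) = Q * i + i from by ring,
          add_right_comm, Nat.add_sub_cancel],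
      show Q * (j + 1) + j - Q = j * (Q + 1) from by
        rw [show Q * (j + 1) = Q * j + Q from by ring, show j * (Q + 1) = Q * j + j from by ring,
          add_right_comm, Nat.add_sub_cancel],
      hRHS, halpha]
    congr 1
    push_cast
    ring
end

section
/- Let q = p^r be an odd prime power, k = (q−1)/2, and for an integer n let C(n) denote the condition: 0 < 2n < q−1 and (n mod p^i) < p^i/2 for each i ∈ {1,...,r−1}. Then for 0 < n < k, C(n) holds if and only if C(k−n) holds. -/
/-- For `0 < m` and `x < 2m`, either `x % m = x` or `x % m + m = x`. -/
lemma mod_of_lt_two_mul {x m : ℕ} (hm : 0 < m) (hx : x < 2 * m) :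
    x % m = x ∨ x % m + m = x := by
  rcases lt_or_ge x m with h | h
  · exact Or.inl (Nat.mod_eq_of_lt h)
  · right
    rw [Nat.mod_eq_sub_mod h, Nat.mod_eq_of_lt (by omega)]
    omega

/-- The condition `C(n)` for `q = p^r`: `0 < 2n < q - 1` and `(n mod p^i) < p^i / 2` for each
`i ∈ {1, …, r-1}` (since `p^i` is odd, `(n mod p^i) < p^i/2` means `2 (n mod p^i) < p^i`). -/
def CondC (p r q n : ℕ) : Prop :=
  0 < 2 * n ∧ 2 * n < q - 1 ∧ ∀ i, 1 ≤ i → i ≤ r - 1 → 2 * (n % p ^ i) < p ^ i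

/-- For `q = p^r` an odd prime power, `k = (q-1)/2` and `0 < n < k`,
`C(n)` holds if and only if `C(k - n)` holds. -/
theorem stmt5 (p r q : ℕ) (hp : p.Prime) (hodd : Odd p) (hq : q = p ^ r) (hr : 1 ≤ r)
    (n : ℕ) (hn : 0 < n) (hnk : n < (q - 1) / 2) :
    CondC p r q n ↔ CondC p r q ((q - 1) / 2 - n) := by
  have hp3 : 3 ≤ p := by
    rcases hodd with ⟨c, hc⟩
    have := hp.two_le
    omega
  have hqodd : Odd q := by rw [hq]; exact hodd.pow
  have hq3 : 3 ≤ q := by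
    rw [hq]
    exact le_trans hp3 (Nat.le_self_pow (by omega) p)
  set k := (q - 1) / 2 with hk
  have h2k : 2 * k = q - 1 := by
    rcases hqodd with ⟨c, hc⟩
    omega
  have hnk' : n ≤ k := le_of_lt hnk
  have main : ∀ i, 1 ≤ i → i ≤ r - 1 →
      (2 * (n % p ^ i) < p ^ i ↔ 2 * ((k - n) % p ^ i) < p ^ i) := by
    intro i h1 h2
    set m := p ^ i with hm
    have hmq : m ∣ q := hq ▸ pow_dvd_pow p (by omega)
    have hmodd : Odd m := hodd.pow
    have hm3 : 3 ≤ m := le_trans hp3 (Nat.le_self_pow (by omega) p)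
    obtain ⟨c, hc⟩ := hmodd
    -- compute 2 * (k % m) = m - 1
    have h2km : (2 * k) % m = m - 1 := by
      obtain ⟨s, hs⟩ := hmq
      rcases Nat.eq_zero_or_pos s with hs0 | hs0
      · rw [hs0, Nat.mul_zero] at hs; omega
      obtain ⟨t, rfl⟩ : ∃ t, s = t + 1 := ⟨s - 1, by omega⟩
      have h2k' : 2 * k = m * t + (m - 1) := by
        have : q = m * t + m := by rw [hs]; ring
        omega
      rw [h2k', Nat.mul_add_mod, Nat.mod_eq_of_lt (by omega)]
    have hkm : 2 * (k % m) = m - 1 := by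
      have hmm : (2 * (k % m)) % m = m - 1 := by
        rw [Nat.mul_mod, Nat.mod_mod_of_dvd _ dvd_rfl, ← Nat.mul_mod, h2km]
      have hb : k % m < m := Nat.mod_lt _ (by omega)
      rcases mod_of_lt_two_mul (show 0 < m by omega)
        (show 2 * (k % m) < 2 * m by omega) with h | h <;> omega
    -- a + b ≡ k (mod m), with a + b < 2m
    set a := n % m with ha
    set b := (k - n) % m with hb
    have hab : (a + b) % m = k % m := by
      rw [ha, hb, ← Nat.add_mod, Nat.add_sub_cancel' hnk']
    have haltm : a < m := Nat.mod_lt _ (by omega)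
    have hbltm : b < m := Nat.mod_lt _ (by omega)
    rcases mod_of_lt_two_mul (show 0 < m by omega)
      (show a + b < 2 * m by omega) with h | h <;> omega
  constructor
  · rintro ⟨c1, c2, c3⟩
    refine ⟨by omega, by omega, fun i hi1 hi2 => (main i hi1 hi2).mp (c3 i hi1 hi2)⟩
  · rintro ⟨c1, c2, c3⟩
    refine ⟨by omega, by omega, fun i hi1 hi2 => (main i hi1 hi2).mpr (c3 i hi1 hi2)⟩
end

section
/- Let q = p^r be an odd prime power. For 0 < n < q−1, the condition C(n) [0 < 2n < q−1 and (n mod p^i) < p^i/2 for 1 ≤ i ≤ r−1] is equivalent to the condition C(n,n): (n' + n' < q−1 where n' = n mod (q−1)) and the multinomial coefficient (q−1)!/(n!·n!·(q−1−2n)!) is not divisible by p. -/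
/-- The condition `C(b,c)`: with `b' = b mod (q-1)` and `c' = c mod (q-1)`, require
`b' + c' < q - 1` and that the multinomial coefficient `(q-1)!/(b'! c'! (q-1-b'-c')!)` is
not divisible by `p`. -/
def CondBC (p q b c : ℕ) : Prop :=
  b % (q - 1) + c % (q - 1) < q - 1 ∧
    ¬ p ∣ (q - 1).factorial /
      ((b % (q - 1)).factorial * (c % (q - 1)).factorial
        * (q - 1 - b % (q - 1) - c % (q - 1)).factorial)

/-- If `a < p` with `p` prime, then `p ∤ choose a b` iff `b ≤ a`. -/
lemma aux_not_dvd_choose {p : ℕ} (hp : p.Prime) {a b : ℕ} (ha : a < p) :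
    ¬ p ∣ a.choose b ↔ b ≤ a := by
  constructor
  · intro h
    by_contra hb
    push_neg at hb
    exact h (by simp [Nat.choose_eq_zero_of_lt hb])
  · intro hb hdvd
    have h1 : a.choose b ∣ a.factorial :=
      ⟨b.factorial * (a - b).factorial, by
        rw [← Nat.choose_mul_factorial_mul_factorial hb]; ring⟩
    exact absurd ((Nat.Prime.dvd_factorial hp).mp (hdvd.trans h1)) (by omega)

/-- Lucas corollary: non-divisibility of a binomial coefficient is digit-domination. -/
lemma aux_lucas {p : ℕ} (hp : p.Prime) {r m k : ℕ} (hm : m < p ^ r) (hk : k < p ^ r) :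
    ¬ p ∣ m.choose k ↔ ∀ i < r, k / p ^ i % p ≤ m / p ^ i % p := by
  haveI := Fact.mk hp
  have hcong := Choose.choose_modEq_prod_range_choose_nat (p := p) hm hk
  have hdvd : p ∣ m.choose k ↔
      p ∣ ∏ i ∈ Finset.range r, (m / p ^ i % p).choose (k / p ^ i % p) :=
    ⟨fun h => Nat.modEq_zero_iff_dvd.1 (hcong.symm.trans (Nat.modEq_zero_iff_dvd.2 h)),
     fun h => Nat.modEq_zero_iff_dvd.1 (hcong.trans (Nat.modEq_zero_iff_dvd.2 h))⟩
  rw [hdvd, hp.prime.dvd_finset_prod_iff] at *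
  constructor
  · intro h i hi
    have hlt : m / p ^ i % p < p := Nat.mod_lt _ hp.pos
    by_contra hle
    push_neg at hle
    exact h ⟨i, Finset.mem_range.2 hi, by simp [Nat.choose_eq_zero_of_lt hle]⟩
  · rintro h ⟨i, hi, hdvd'⟩
    have hlt : m / p ^ i % p < p := Nat.mod_lt _ hp.pos
    exact ((aux_not_dvd_choose hp hlt).2 (h i (Finset.mem_range.1 hi))) hdvd'

lemma aux_key {p : ℕ} (hp : 2 ≤ p) {m i b : ℕ} (hi : i ≤ m) (hb : b < p ^ (m - i)) :
    p ^ i * (p ^ (m - i) - 1 - b) + p ^ i * b + p ^ i = p ^ m := by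
  have e : (p ^ (m - i) - 1 - b) + b + 1 = p ^ (m - i) := by omega
  calc p ^ i * (p ^ (m - i) - 1 - b) + p ^ i * b + p ^ i
      = p ^ i * ((p ^ (m - i) - 1 - b) + b + 1) := by ring
    _ = p ^ i * p ^ (m - i) := by rw [e]
    _ = p ^ m := by rw [← pow_add]; congr 1; omega

/-- `(p^m - 1 - x) / p^i = p^(m-i) - 1 - x / p^i` for `x < p^m`. -/
lemma aux_sub_div {p : ℕ} (hp : 2 ≤ p) {m i x : ℕ} (hi : i ≤ m) (hx : x < p ^ m) :
    (p ^ m - 1 - x) / p ^ i = p ^ (m - i) - 1 - x / p ^ i := by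
  have hpi : 0 < p ^ i := Nat.pow_pos (by omega)
  have hb : x / p ^ i < p ^ (m - i) := Nat.div_lt_of_lt_mul (by
    rw [← pow_add]
    calc x < p ^ m := hx
      _ = p ^ (i + (m - i)) := by rw [Nat.add_sub_cancel' hi])
  have key := aux_key hp hi hb
  have hsplit := Nat.div_add_mod x (p ^ i)
  have ha : x % p ^ i < p ^ i := Nat.mod_lt _ hpi
  have hexp : p ^ m - 1 - x =
      p ^ i * (p ^ (m - i) - 1 - x / p ^ i) + (p ^ i - 1 - x % p ^ i) := by
    revert key hsplit
    generalize p ^ i * (p ^ (m - i) - 1 - x / p ^ i) = A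
    generalize p ^ i * (x / p ^ i) = B
    intro key hsplit
    omega
  rw [hexp, Nat.mul_add_div hpi,
    Nat.div_eq_of_lt (lt_of_le_of_lt (Nat.sub_le _ _) (Nat.sub_lt hpi one_pos)), add_zero]

/-- `(p^m - 1 - x) % p = p - 1 - x % p` for `x < p^m`, `1 ≤ m`. -/
lemma aux_sub_mod {p : ℕ} (hp : 2 ≤ p) {m x : ℕ} (hm : 1 ≤ m) (hx : x < p ^ m) :
    (p ^ m - 1 - x) % p = p - 1 - x % p := by
  have hdiv := aux_sub_div hp (show 1 ≤ m from hm) hx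
  rw [pow_one] at hdiv
  have hmod := Nat.mod_def (p ^ m - 1 - x) p
  rw [hdiv] at hmod
  have hsplit := Nat.div_add_mod x p
  have hxp : x % p < p := Nat.mod_lt _ (by omega)
  have hb : x / p < p ^ (m - 1) := Nat.div_lt_of_lt_mul (by
    rw [mul_comm, ← pow_succ]
    calc x < p ^ m := hx
      _ = p ^ (m - 1 + 1) := by congr 1; omega)
  have key : p ^ 1 * (p ^ (m - 1) - 1 - x / p) + p ^ 1 * (x / p) + p ^ 1 = p ^ m :=
    aux_key hp (show 1 ≤ m from hm) (by simpa using hb)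
  rw [pow_one] at key
  set c := x % p with hc
  set d := x / p with hd
  set E := p * (p ^ (m - 1) - 1 - d) with hE
  set F := p * d with hF
  omega

/-- digits of `p^m - 1` are all `p - 1`. -/
lemma aux_digit_pred {p : ℕ} (hp : 2 ≤ p) {m i : ℕ} (hi : i < m) :
    (p ^ m - 1) / p ^ i % p = p - 1 := by
  have h := aux_sub_div hp (le_of_lt hi) (x := 0) (Nat.pow_pos (by omega))
  simp only [Nat.sub_zero, Nat.zero_div] at h
  rw [h]
  have h2 := aux_sub_mod hp (m := m - i) (x := 0) (by omega)
    (Nat.pow_pos (by omega))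
  simpa using h2

/-- digit of `p^m - 1 - x`. -/
lemma aux_digit_sub {p : ℕ} (hp : 2 ≤ p) {m i x : ℕ} (hi : i < m) (hx : x < p ^ m) :
    (p ^ m - 1 - x) / p ^ i % p = p - 1 - x / p ^ i % p := by
  rw [aux_sub_div hp (le_of_lt hi) hx]
  have hb : x / p ^ i < p ^ (m - i) := Nat.div_lt_of_lt_mul (by
    rw [← pow_add]
    calc x < p ^ m := hx
      _ = p ^ (i + (m - i)) := by rw [Nat.add_sub_cancel' (le_of_lt hi)])
  exact aux_sub_mod hp (by omega) hb

/-- Base decomposition: `n % p^(i+1) = p^i * (n / p^i % p) + n % p^i`. -/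
lemma aux_mod_succ {p n i : ℕ} (hp : 0 < p) :
    n % p ^ (i + 1) = p ^ i * (n / p ^ i % p) + n % p ^ i := by
  have e2 : n % p ^ (i + 1) / p ^ i = n / p ^ i % p := by
    rw [pow_succ]
    exact Nat.mod_mul_right_div_self n (p ^ i) p
  have e1 : n % p ^ (i + 1) % p ^ i = n % p ^ i :=
    Nat.mod_mod_of_dvd n (pow_dvd_pow p (Nat.le_succ i))
  conv_lhs => rw [← Nat.div_add_mod (n % p ^ (i + 1)) (p ^ i)]
  rw [e1, e2]

/-- For `q = p^r` odd and `0 < n < q - 1`, the condition `C(n)` is equivalent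
to the condition `C(n,n)`. -/
theorem stmt6 (p r q : ℕ) (hp : p.Prime) (hodd : Odd p) (hq : q = p ^ r) (hr : 1 ≤ r)
    (n : ℕ) (hn0 : 0 < n) (hn1 : n < q - 1) :
    CondC p r q n ↔ CondBC p q n n := by
  subst hq
  have hp2 : 2 ≤ p := hp.two_le
  have hq1 : 1 ≤ p ^ r := Nat.one_le_pow _ _ (by omega)
  have hqp : p ≤ p ^ r := by
    calc p = p ^ 1 := (pow_one p).symm
      _ ≤ p ^ r := Nat.pow_le_pow_right (by omega) hr
  set N := p ^ r - 1 with hN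
  have hnN : n % N = n := Nat.mod_eq_of_lt hn1
  have hnlt : n < p ^ r := by omega
  -- key digit equivalences, valid when 2n ≤ N
  have hdig_dvd : 2 * n ≤ N →
      ((¬ p ∣ N.factorial / (n.factorial * n.factorial * (N - n - n).factorial)) ↔
        ∀ j < r, 2 * (n / p ^ j % p) < p) := by
    intro h2n
    have hle1 : n ≤ N := by omega
    have hle2 : n ≤ N - n := by omega
    have h1 := Nat.choose_mul_factorial_mul_factorial hle1
    have h2 := Nat.choose_mul_factorial_mul_factorial hle2
    have hfac : N.factorial = (N.choose n * (N - n).choose n) *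
        (n.factorial * n.factorial * (N - n - n).factorial) := by
      calc N.factorial = N.choose n * n.factorial * (N - n).factorial := h1.symm
        _ = N.choose n * n.factorial *
            ((N - n).choose n * n.factorial * (N - n - n).factorial) := by rw [h2]
        _ = (N.choose n * (N - n).choose n) *
            (n.factorial * n.factorial * (N - n - n).factorial) := by ring
    have hM : N.factorial / (n.factorial * n.factorial * (N - n - n).factorial)
        = N.choose n * (N - n).choose n := by
      rw [hfac, Nat.mul_div_cancel]
      positivity
    rw [hM, hp.dvd_mul]
    have hNn : N - n < p ^ r := by omega
    have hNlt : N < p ^ r := by omega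
    have hc1 : ¬ p ∣ N.choose n := by
      rw [aux_lucas hp hNlt hnlt]
      intro i hi
      rw [hN, aux_digit_pred hp2 hi]
      have : n / p ^ i % p < p := Nat.mod_lt _ (by omega)
      omega
    have hc2 : ¬ p ∣ (N - n).choose n ↔ ∀ j < r, 2 * (n / p ^ j % p) < p := by
      rw [aux_lucas hp hNn hnlt]
      constructor <;> intro h j hj <;> have hd := h j hj <;>
        have he : (N - n) / p ^ j % p = p - 1 - n / p ^ j % p := aux_digit_sub hp2 hj hnlt <;>
        have hlt : n / p ^ j % p < p := Nat.mod_lt _ (by omega) <;> omega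
    tauto
  -- digits vs partial mods
  have hmods_dig : 2 * n < N →
      ((∀ i, 1 ≤ i → i ≤ r - 1 → 2 * (n % p ^ i) < p ^ i) ↔
        ∀ j < r, 2 * (n / p ^ j % p) < p) := by
    intro h2n
    constructor
    · intro hm j hj
      by_cases hcase : j + 1 ≤ r - 1
      · have h := hm (j + 1) (by omega) hcase
        have e : n / p ^ j % p = n % p ^ (j + 1) / p ^ j := by
          rw [pow_succ]
          exact (Nat.mod_mul_right_div_self n (p ^ j) p).symm
        have hle : p ^ j * (n % p ^ (j + 1) / p ^ j) ≤ n % p ^ (j + 1) :=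
          Nat.mul_div_le _ _
        have hstep : p ^ j * (2 * (n / p ^ j % p)) < p ^ j * p := by
          calc p ^ j * (2 * (n / p ^ j % p))
              = 2 * (p ^ j * (n % p ^ (j + 1) / p ^ j)) := by rw [e]; ring
            _ ≤ 2 * (n % p ^ (j + 1)) := by omega
            _ < p ^ (j + 1) := h
            _ = p ^ j * p := pow_succ p j
        exact Nat.lt_of_mul_lt_mul_left hstep
      · -- j = r - 1
        have hj' : j = r - 1 := by omega
        have hle : p ^ j * (n / p ^ j) ≤ n := Nat.mul_div_le _ _
        have hstep : p ^ j * (2 * (n / p ^ j)) < p ^ j * p := by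
          calc p ^ j * (2 * (n / p ^ j)) = 2 * (p ^ j * (n / p ^ j)) := by ring
            _ ≤ 2 * n := by omega
            _ < p ^ r := by omega
            _ = p ^ j * p := by rw [← pow_succ]; congr 1; omega
        have h2d : 2 * (n / p ^ j) < p := Nat.lt_of_mul_lt_mul_left hstep
        have : n / p ^ j % p ≤ n / p ^ j := Nat.mod_le _ _
        omega
    · intro hd
      have claim : ∀ i, i ≤ r → 2 * (n % p ^ i) ≤ p ^ i - 1 := by
        intro i
        induction i with
        | zero => intro _; simp [Nat.mod_one]
        | succ i ih =>
          intro hi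
          have hdec := aux_mod_succ (p := p) (n := n) (i := i) (by omega)
          have hdig := hd i (by omega)
          have hA : 2 * (p ^ i * (n / p ^ i % p)) ≤ p ^ i * (p - 1) := by
            calc 2 * (p ^ i * (n / p ^ i % p)) = p ^ i * (2 * (n / p ^ i % p)) := by ring
              _ ≤ p ^ i * (p - 1) := Nat.mul_le_mul_left _ (by omega)
          have hB : p ^ i * (p - 1) + p ^ i = p ^ (i + 1) := by
            calc p ^ i * (p - 1) + p ^ i = p ^ i * ((p - 1) + 1) := by ring
              _ = p ^ i * p := by congr 1; omega
              _ = p ^ (i + 1) := (pow_succ p i).symm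
          have hih := ih (by omega)
          have hpi : 1 ≤ p ^ i := Nat.one_le_pow _ _ (by omega)
          omega
      intro i hi1 hi2
      have := claim i (by omega)
      have hpi : 1 ≤ p ^ i := Nat.one_le_pow _ _ (by omega)
      omega
  rw [CondC, CondBC, hnN]
  constructor
  · rintro ⟨h0, h2, hm⟩
    exact ⟨by omega, (hdig_dvd (by omega)).2 ((hmods_dig h2).1 hm)⟩
  · rintro ⟨hsum, hdvd⟩
    have h2 : 2 * n < N := by omega
    exact ⟨by omega, h2, (hmods_dig h2).2 ((hdig_dvd (by omega)).1 hdvd)⟩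
end

section
/- Let q = p^r be odd with q ≠ 3. For any integer b with 1 < b < (q−1)/2 that is not congruent to any of 0, 1, p, p^2, ..., p^{r−1} modulo q−1, there exists an integer n satisfying condition C(n) such that (n·b mod (q−1)) ≥ (q−1)/2. -/
private theorem stmt7aux_condC_intro (p r q n : ℕ) (h1 : 0 < 2 * n) (h2 : 2 * n < q - 1)
    (h3 : ∀ i, 1 ≤ i → i ≤ r - 1 → 2 * (n % p ^ i) < p ^ i) : CondC p r q n :=
  ⟨h1, h2, h3⟩

private theorem stmt7aux_mod_eq {N a u : ℕ} (h : a ≡ u [MOD N]) (hu : u < N) :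
    a % N = u := by
  have h' : a % N = u % N := h
  rw [Nat.mod_eq_of_lt hu] at h'
  exact h'

private theorem stmt7aux_pred_mul (p x y : ℕ) (hp : 0 < p) (h : p * x = y) :
    (p - 1) * x + x = y := by
  rw [Nat.sub_one_mul, Nat.sub_add_cancel (Nat.le_mul_of_pos_left _ hp), h]

/-- digit condition for `(p^r-1)/2 - p^j`. -/
private theorem stmt7aux_digit_half_sub (p r j i : ℕ) (hodd : Odd p) (hp3 : 3 ≤ p)
    (hj : j ≤ r - 1) (hi1 : 1 ≤ i) (hir : i ≤ r - 1) (hr : 2 ≤ r) :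
    2 * (((p ^ r - 1) / 2 - p ^ j) % p ^ i) < p ^ i := by
  have hPQ : p ^ i * p ^ (r - i) = p ^ r := by rw [← pow_add]; congr 1; omega
  obtain ⟨P', hP'⟩ := (hodd.pow : Odd (p ^ i))
  obtain ⟨Q', hQ'⟩ := (hodd.pow : Odd (p ^ (r - i)))
  have hP3 : 3 ≤ p ^ i := le_trans hp3 (Nat.le_self_pow (by omega) p)
  have hQ3 : 3 ≤ p ^ (r - i) := le_trans hp3 (Nat.le_self_pow (by omega) p)
  have key : p ^ i * p ^ (r - i) = 4 * (P' * Q') + 2 * P' + 2 * Q' + 1 := by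
    rw [hP', hQ']; ring
  have e : Q' * p ^ i = 2 * (P' * Q') + Q' := by rw [hP']; ring
  have half : (p ^ r - 1) / 2 = Q' * p ^ i + P' := by omega
  rcases le_or_gt i j with hij | hij
  · have hE : p ^ j = p ^ (j - i) * p ^ i := by rw [← pow_add]; congr 1; omega
    have hQE : p ^ (r - i) = p ^ (r - 1 - j) * p * p ^ (j - i) := by
      rw [← pow_succ, ← pow_add]; congr 1; omega
    have h3E : 3 * p ^ (j - i) ≤ p ^ (r - i) := by
      calc 3 * p ^ (j - i) = 1 * 3 * p ^ (j - i) := by ring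
        _ ≤ p ^ (r - 1 - j) * p * p ^ (j - i) :=
            Nat.mul_le_mul (Nat.mul_le_mul (Nat.one_le_pow _ _ (by omega)) hp3) le_rfl
        _ = p ^ (r - i) := hQE.symm
    have hQ'E : p ^ (j - i) ≤ Q' := by omega
    have e2 : (Q' - p ^ (j - i)) * p ^ i + p ^ (j - i) * p ^ i = Q' * p ^ i := by
      rw [← add_mul]; congr 1; omega
    have hsplit : (p ^ r - 1) / 2 - p ^ j = (Q' - p ^ (j - i)) * p ^ i + P' := by omega
    rw [hsplit, add_comm, Nat.add_mul_mod_self_right,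
      Nat.mod_eq_of_lt (by omega : P' < p ^ i)]
    omega
  · have hQE : p ^ i = p ^ (i - 1 - j) * p * p ^ j := by
      rw [← pow_succ, ← pow_add]; congr 1; omega
    have h3j : 3 * p ^ j ≤ p ^ i := by
      calc 3 * p ^ j = 1 * 3 * p ^ j := by ring
        _ ≤ p ^ (i - 1 - j) * p * p ^ j :=
            Nat.mul_le_mul (Nat.mul_le_mul (Nat.one_le_pow _ _ (by omega)) hp3) le_rfl
        _ = p ^ i := hQE.symm
    have hpj1 : 1 ≤ p ^ j := Nat.one_le_pow _ _ (by omega)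
    have hsplit : (p ^ r - 1) / 2 - p ^ j = Q' * p ^ i + (P' - p ^ j) := by omega
    rw [hsplit, add_comm, Nat.add_mul_mod_self_right,
      Nat.mod_eq_of_lt (by omega : P' - p ^ j < p ^ i)]
    omega

/-- digit condition for `n0 * p^j` with small `n0`. -/
private theorem stmt7aux_digit_one (p n0 j i : ℕ) (hp3 : 3 ≤ p) (h0 : 2 * n0 < p)
    (hi : 1 ≤ i) : 2 * ((n0 * p ^ j) % p ^ i) < p ^ i := by
  have hpi : 0 < p ^ i := pow_pos (by omega) i
  rcases le_or_gt i j with h1 | h1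
  · have e : n0 * p ^ j = (n0 * p ^ (j - i)) * p ^ i := by
      rw [show p ^ j = p ^ (j - i) * p ^ i from by rw [← pow_add]; congr 1; omega]
      ring
    rw [e, Nat.mul_mod_left]
    omega
  · have c1 : 2 * n0 * p ^ j ≤ (p - 1) * p ^ (i - 1) :=
      Nat.mul_le_mul (by omega) (Nat.pow_le_pow_right (by omega) (by omega))
    have c3 : p * p ^ (i - 1) = p ^ i := by rw [← pow_succ']; congr 1; omega
    have c2 : (p - 1) * p ^ (i - 1) + p ^ (i - 1) = p ^ i :=
      stmt7aux_pred_mul p _ _ (by omega) c3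
    have c4 : 2 * n0 * p ^ j = 2 * (n0 * p ^ j) := by ring
    have c5 : 0 < p ^ (i - 1) := pow_pos (by omega) _
    rw [Nat.mod_eq_of_lt (by omega : n0 * p ^ j < p ^ i)]
    omega

/-- digit condition for `n0 * p^k1 + n0 * p^k2` with small `n0`, `k1 < k2`. -/
private theorem stmt7aux_digit_two (p n0 k1 k2 i : ℕ) (hp3 : 3 ≤ p) (h0 : 2 * n0 < p)
    (hk : k1 < k2) (hi : 1 ≤ i) :
    2 * ((n0 * p ^ k1 + n0 * p ^ k2) % p ^ i) < p ^ i := by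
  have hpi : 0 < p ^ i := pow_pos (by omega) i
  rcases le_or_gt i k1 with h1 | h1
  · have e1 : p ^ k1 = p ^ (k1 - i) * p ^ i := by rw [← pow_add]; congr 1; omega
    have e2 : p ^ k2 = p ^ (k2 - i) * p ^ i := by rw [← pow_add]; congr 1; omega
    have e : n0 * p ^ k1 + n0 * p ^ k2 = (n0 * p ^ (k1 - i) + n0 * p ^ (k2 - i)) * p ^ i := by
      rw [e1, e2]; ring
    rw [e, Nat.mul_mod_left]
    omega
  rcases le_or_gt i k2 with h2 | h2
  · have e : n0 * p ^ k2 = (n0 * p ^ (k2 - i)) * p ^ i := by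
      rw [show p ^ k2 = p ^ (k2 - i) * p ^ i from by rw [← pow_add]; congr 1; omega]
      ring
    have c1 : 2 * n0 * p ^ k1 ≤ (p - 1) * p ^ (i - 1) :=
      Nat.mul_le_mul (by omega) (Nat.pow_le_pow_right (by omega) (by omega))
    have c3 : p * p ^ (i - 1) = p ^ i := by rw [← pow_succ']; congr 1; omega
    have c2 : (p - 1) * p ^ (i - 1) + p ^ (i - 1) = p ^ i :=
      stmt7aux_pred_mul p _ _ (by omega) c3
    have c4 : 2 * n0 * p ^ k1 = 2 * (n0 * p ^ k1) := by ring
    have c5 : 0 < p ^ (i - 1) := pow_pos (by omega) _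
    have hlt : 2 * (n0 * p ^ k1) < p ^ i := by omega
    rw [e, Nat.add_mul_mod_self_right,
      Nat.mod_eq_of_lt (by omega : n0 * p ^ k1 < p ^ i)]
    exact hlt
  · have hi2 : 2 ≤ i := by omega
    have c3 : p * p ^ (i - 1) = p ^ i := by rw [← pow_succ']; congr 1; omega
    have c3' : p * p ^ (i - 2) = p ^ (i - 1) := by rw [← pow_succ']; congr 1; omega
    have c1 : 2 * n0 * p ^ k1 ≤ (p - 1) * p ^ (i - 2) :=
      Nat.mul_le_mul (by omega) (Nat.pow_le_pow_right (by omega) (by omega))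
    have c1' : 2 * n0 * p ^ k2 ≤ (p - 1) * p ^ (i - 1) :=
      Nat.mul_le_mul (by omega) (Nat.pow_le_pow_right (by omega) (by omega))
    have c2 : (p - 1) * p ^ (i - 2) + p ^ (i - 2) = p ^ (i - 1) :=
      stmt7aux_pred_mul p _ _ (by omega) c3'
    have c2' : (p - 1) * p ^ (i - 1) + p ^ (i - 1) = p ^ i :=
      stmt7aux_pred_mul p _ _ (by omega) c3
    have c4 : 2 * n0 * p ^ k1 = 2 * (n0 * p ^ k1) := by ring
    have c4' : 2 * n0 * p ^ k2 = 2 * (n0 * p ^ k2) := by ring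
    have c5 : 0 < p ^ (i - 2) := pow_pos (by omega) _
    have hlt : 2 * (n0 * p ^ k1 + n0 * p ^ k2) < p ^ i := by omega
    rw [Nat.mod_eq_of_lt (by omega : n0 * p ^ k1 + n0 * p ^ k2 < p ^ i)]
    exact hlt

/-- Let `q = p^r` be odd, `q ≠ 3`.  For any integer `b` with `1 < b < (q-1)/2`
not congruent to any of `0, 1, p, p², …, p^{r-1}` modulo `q - 1`, there exists `n` satisfying
`C(n)` such that the residue `(n·b mod (q-1))` is at least `(q-1)/2`. -/
theorem stmt7 (p r q : ℕ) (hp : p.Prime) (hodd : Odd p) (hq : q = p ^ r) (hr : 1 ≤ r)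
    (hq3 : q ≠ 3) (b : ℕ) (hb1 : 1 < b) (hb2 : 2 * b < q - 1)
    (hb0 : ¬ b ≡ 0 [MOD q - 1]) (hbp : ∀ i < r, ¬ b ≡ p ^ i [MOD q - 1]) :
    ∃ n, CondC p r q n ∧ (q - 1) / 2 ≤ (n * b) % (q - 1) := by
  subst hq
  have hp2 := hp.two_le
  have hpo : p % 2 = 1 := Nat.odd_iff.mp hodd
  have hp3 : 3 ≤ p := by omega
  have hqodd : Odd (p ^ r) := hodd.pow
  have hqo : p ^ r % 2 = 1 := Nat.odd_iff.mp hqodd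
  have hqp : p ≤ p ^ r := Nat.le_self_pow (by omega) p
  have hq3' : p ^ r ≠ 3 := hq3
  have hq5 : 5 ≤ p ^ r := by omega
  rcases eq_or_lt_of_le hr with hr1 | hr2
  · -- case r = 1
    subst hr1
    have hpow1 : p ^ 1 = p := pow_one p
    set n := (p ^ 1 - 1 - 1) / (2 * b) + 1 with hn
    have hb0' : 0 < 2 * b := by omega
    have key1 : p ^ 1 - 1 - 1 < n * (2 * b) := by
      rw [hn]
      exact (Nat.div_lt_iff_lt_mul hb0').mp (Nat.lt_succ_self _)
    have key2 : n * (2 * b) ≤ p ^ 1 - 1 - 1 + 2 * b := by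
      rw [hn, add_mul, one_mul]
      exact Nat.add_le_add_right (Nat.div_mul_le_self _ _) _
    have e2 : n * (2 * b) = 2 * (n * b) := by ring
    rw [e2] at key1 key2
    have h9 : (p ^ 1 - 1 - 1) / (2 * b) ≤ (p ^ 1 - 1 - 1) / 4 :=
      Nat.div_le_div_left (by omega) (by norm_num)
    have hnlt : n ≤ (p ^ 1 - 1 - 1) / 4 + 1 := by
      rw [hn]; exact Nat.add_le_add_right h9 1
    have hn1 : 1 ≤ n := by rw [hn]; exact Nat.le_add_left 1 _
    have hN5 : 5 ≤ p ^ 1 - 1 := by omega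
    have hmod : (n * b) % (p ^ 1 - 1) = n * b := Nat.mod_eq_of_lt (by omega)
    refine ⟨n, stmt7aux_condC_intro _ _ _ _ (by omega) (by omega)
      (fun i h1 h2 => absurd h2 (by omega)), ?_⟩
    rw [hmod]
    omega
  · -- case 2 ≤ r
    have hr2' : 2 ≤ r := hr2
    have hNval : p ^ r - 1 + 1 = p ^ r := by omega
    have hp2r : 9 ≤ p ^ r := by
      have h1 : p ^ 2 ≤ p ^ r := Nat.pow_le_pow_right (by omega) hr2'
      have h2 : 3 * 3 ≤ p * p := Nat.mul_le_mul hp3 hp3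
      have h3 : p * p = p ^ 2 := by ring
      omega
    have hpr1 : p ^ (r - 1) * p = p ^ r := by rw [← pow_succ]; congr 1; omega
    have hp_le : p ≤ p ^ (r - 1) := Nat.le_self_pow (by omega) p
    have hpr1a : 3 * p ^ (r - 1) ≤ p ^ r := by
      have h1 : p ^ (r - 1) * 3 ≤ p ^ (r - 1) * p := Nat.mul_le_mul_left _ hp3
      omega
    have hpr1pos : 0 < p ^ (r - 1) := pow_pos (by omega) _
    have h2pr1 : 2 * p ^ (r - 1) < p ^ r - 1 := by omega
    have hN2 : (p ^ r - 1) / 2 * 2 = p ^ r - 1 := by omega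
    have hprmod : (p ^ r) ≡ 1 [MOD p ^ r - 1] := by
      have h : (p ^ r - 1 + 1) % (p ^ r - 1) = 1 % (p ^ r - 1) := Nat.add_mod_left _ _
      rw [hNval] at h
      exact h
    have hpow_red : ∀ m : ℕ, (p ^ m) ≡ p ^ (m % r) [MOD p ^ r - 1] := by
      intro m
      have e : p ^ m = (p ^ r) ^ (m / r) * p ^ (m % r) := by
        rw [← pow_mul, ← pow_add, Nat.div_add_mod]
      rw [e]
      have h := Nat.ModEq.mul_right (p ^ (m % r)) (hprmod.pow (m / r))
      simpa using h
    rcases Nat.even_or_odd b with hbe | hbo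
    · -- b even
      obtain ⟨b', hb'⟩ := hbe
      have e1 : ((p ^ r - 1) / 2 - 1) * b + b = (p ^ r - 1) / 2 * b := by
        have h0 : (p ^ r - 1) / 2 - 1 + 1 = (p ^ r - 1) / 2 := by omega
        calc ((p ^ r - 1) / 2 - 1) * b + b = ((p ^ r - 1) / 2 - 1 + 1) * b := by ring
          _ = (p ^ r - 1) / 2 * b := by rw [h0]
      have e2 : (p ^ r - 1) / 2 * b = (p ^ r - 1) * b' := by
        calc (p ^ r - 1) / 2 * b = (p ^ r - 1) / 2 * 2 * b' := by rw [hb']; ring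
          _ = (p ^ r - 1) * b' := by rw [hN2]
      have h01 : ((p ^ r - 1) / 2 - 1) * b + b ≡ 0 [MOD p ^ r - 1] := by
        rw [e1, e2]
        exact Nat.modEq_zero_iff_dvd.mpr ⟨b', rfl⟩
      have h02 : (p ^ r - 1 - b) + b ≡ 0 [MOD p ^ r - 1] := by
        rw [show (p ^ r - 1 - b) + b = p ^ r - 1 from by omega]
        exact Nat.modEq_zero_iff_dvd.mpr dvd_rfl
      have hcancel : ((p ^ r - 1) / 2 - 1) * b ≡ p ^ r - 1 - b [MOD p ^ r - 1] :=
        Nat.ModEq.add_right_cancel' b (h01.trans h02.symm)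
      refine ⟨(p ^ r - 1) / 2 - 1, stmt7aux_condC_intro _ _ _ _ (by omega) (by omega) ?_, ?_⟩
      · intro i h1 h2
        simpa using stmt7aux_digit_half_sub p r 0 i hodd hp3 (by omega) h1 h2 hr2'
      · rw [stmt7aux_mod_eq hcancel (by omega)]
        omega
    · -- b odd
      have hbo' : b % 2 = 1 := Nat.odd_iff.mp hbo
      by_cases hO1 : ∃ j, j < r ∧ (p ^ r - 1) / 2 < (p ^ j * b) % (p ^ r - 1)
      · -- some shift exceeds half
        obtain ⟨j, hjr, hcj⟩ := hO1
        set c := (p ^ j * b) % (p ^ r - 1) with hc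
        have hcN : c < p ^ r - 1 := Nat.mod_lt _ (by omega)
        have hpj : p ^ j ≤ p ^ (r - 1) := Nat.pow_le_pow_right (by omega) (by omega)
        have hpj0 : 0 < p ^ j := pow_pos (by omega) _
        have e0 : (p ^ r - 1) / 2 - p ^ j + p ^ j = (p ^ r - 1) / 2 := by omega
        have e1 : ((p ^ r - 1) / 2 - p ^ j) * b + p ^ j * b = (p ^ r - 1) / 2 * b := by
          rw [← add_mul, e0]
        have e3 : (p ^ r - 1) / 2 * b = (p ^ r - 1) * ((b - 1) / 2) + (p ^ r - 1) / 2 := by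
          have hb2' : b = 2 * ((b - 1) / 2) + 1 := by omega
          calc (p ^ r - 1) / 2 * b = (p ^ r - 1) / 2 * (2 * ((b - 1) / 2) + 1) := by
                rw [← hb2']
            _ = ((p ^ r - 1) / 2 * 2) * ((b - 1) / 2) + (p ^ r - 1) / 2 := by ring
            _ = (p ^ r - 1) * ((b - 1) / 2) + (p ^ r - 1) / 2 := by rw [hN2]
        have h01 : ((p ^ r - 1) / 2 - p ^ j) * b + p ^ j * b ≡ (p ^ r - 1) / 2
            [MOD p ^ r - 1] := by
          rw [e1, e3]
          have h := Nat.ModEq.add_right ((p ^ r - 1) / 2)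
            ((Nat.modEq_zero_iff_dvd.mpr ⟨(b - 1) / 2, rfl⟩) :
              (p ^ r - 1) * ((b - 1) / 2) ≡ 0 [MOD p ^ r - 1])
          simpa using h
        have h02 : p ^ j * b ≡ c [MOD p ^ r - 1] := (Nat.mod_modEq _ _).symm
        have h03 : ((p ^ r - 1) / 2 - p ^ j) * b + c ≡ (p ^ r - 1) / 2 [MOD p ^ r - 1] :=
          (Nat.ModEq.add_left _ h02.symm).trans h01
        have h04 : ((p ^ r - 1) / 2 + (p ^ r - 1) - c) + c ≡ (p ^ r - 1) / 2
            [MOD p ^ r - 1] := by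
          rw [show ((p ^ r - 1) / 2 + (p ^ r - 1) - c) + c = (p ^ r - 1) / 2 + (p ^ r - 1)
            from by omega]
          exact Nat.add_mod_right _ _
        have h05 : ((p ^ r - 1) / 2 - p ^ j) * b ≡ (p ^ r - 1) / 2 + (p ^ r - 1) - c
            [MOD p ^ r - 1] := Nat.ModEq.add_right_cancel' c (h03.trans h04.symm)
        refine ⟨(p ^ r - 1) / 2 - p ^ j, stmt7aux_condC_intro _ _ _ _ (by omega) (by omega)
          ?_, ?_⟩
        · intro i h1 h2
          exact stmt7aux_digit_half_sub p r j i hodd hp3 (by omega) h1 h2 hr2'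
        · rw [stmt7aux_mod_eq h05 (by omega)]
          omega
      · push_neg at hO1
        by_cases hO2 : ∃ j, j < r ∧ p ^ r - 1 ≤ (p - 1) * ((p ^ j * b) % (p ^ r - 1))
        · -- some shift with (p-1)*c ≥ N
          obtain ⟨j, hjr, hcge⟩ := hO2
          set c := (p ^ j * b) % (p ^ r - 1) with hc
          have hcN2 : c ≤ (p ^ r - 1) / 2 := hO1 j hjr
          have hcpos : 0 < c := by
            rcases Nat.eq_zero_or_pos c with h | h
            · rw [h, mul_zero] at hcge; omega
            · exact h
          set n0 := (p ^ r - 1 - 1) / (2 * c) + 1 with hn0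
          have hc0' : 0 < 2 * c := by omega
          have key1 : p ^ r - 1 - 1 < n0 * (2 * c) := by
            rw [hn0]
            exact (Nat.div_lt_iff_lt_mul hc0').mp (Nat.lt_succ_self _)
          have key2 : n0 * (2 * c) ≤ p ^ r - 1 - 1 + 2 * c := by
            rw [hn0, add_mul, one_mul]
            exact Nat.add_le_add_right (Nat.div_mul_le_self _ _) _
          have e2 : n0 * (2 * c) = 2 * (n0 * c) := by ring
          rw [e2] at key1 key2
          have hn01 : 1 ≤ n0 := by rw [hn0]; exact Nat.le_add_left 1 _
          have hn0p : 2 * n0 < p := by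
            by_contra hcon
            push_neg at hcon
            have h1 : (p - 1) * c ≤ (2 * (n0 - 1)) * c := Nat.mul_le_mul_right c (by omega)
            have h2 : (2 * (n0 - 1)) * c = (n0 - 1) * (2 * c) := by ring
            have h3 : (n0 - 1) * (2 * c) ≤ p ^ r - 1 - 1 := by
              rw [hn0]
              simp only [Nat.add_sub_cancel]
              exact Nat.div_mul_le_self _ _
            omega
          have hnc_lt : n0 * c ≤ p ^ r - 1 - 1 := by omega
          have hpj0 : 0 < p ^ j := pow_pos (by omega) _
          refine ⟨n0 * p ^ j, stmt7aux_condC_intro _ _ _ _ ?_ ?_ ?_, ?_⟩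
          · have h : 0 < n0 * p ^ j := Nat.mul_pos (by omega) hpj0
            omega
          · have c1 : 2 * n0 * p ^ j ≤ (p - 1) * p ^ (r - 1) :=
              Nat.mul_le_mul (by omega) (Nat.pow_le_pow_right (by omega) (by omega))
            have c3 : p * p ^ (r - 1) = p ^ r := by rw [← pow_succ']; congr 1; omega
            have c2 : (p - 1) * p ^ (r - 1) + p ^ (r - 1) = p ^ r :=
              stmt7aux_pred_mul p _ _ (by omega) c3
            have c4 : 2 * n0 * p ^ j = 2 * (n0 * p ^ j) := by ring
            omega
          · intro i h1 h2
            exact stmt7aux_digit_one p n0 j i hp3 hn0p h1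
          · have e5 : n0 * p ^ j * b = n0 * (p ^ j * b) := by ring
            have h06 : n0 * (p ^ j * b) ≡ n0 * c [MOD p ^ r - 1] :=
              Nat.ModEq.mul_left n0 (Nat.mod_modEq _ _).symm
            rw [e5, stmt7aux_mod_eq h06 (by omega)]
            omega
        · -- all shifts with (p-1)*c < N : binary digit case
          push_neg at hO2
          have hbN : b < p ^ r - 1 := by omega
          set i0 := Nat.log p b with hi0
          have hlog1 : p ^ i0 ≤ b := by
            rw [hi0]; exact Nat.pow_log_le_self p (by omega)
          have hlog2 : b < p ^ (i0 + 1) := by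
            rw [hi0]; exact Nat.lt_pow_succ_log_self (by omega) b
          have hi0r : i0 < r := by
            by_contra hcon
            push_neg at hcon
            have h : p ^ r ≤ p ^ i0 := Nat.pow_le_pow_right (by omega) hcon
            omega
          set k := r - 1 - i0 with hk
          have hkr : k < r := by omega
          set c := p ^ k * b with hcdef
          have hpk0 : 0 < p ^ k := pow_pos (by omega) _
          have hc1 : p ^ (r - 1) ≤ c := by
            have h1 : p ^ k * p ^ i0 ≤ p ^ k * b := Nat.mul_le_mul_left _ hlog1
            have e : p ^ k * p ^ i0 = p ^ (r - 1) := by rw [← pow_add]; congr 1; omega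
            omega
          have hcN : c < p ^ r - 1 := by
            have h1 : p ^ k * (b + 1) ≤ p ^ k * p ^ (i0 + 1) :=
              Nat.mul_le_mul_left _ (by omega)
            have e : p ^ k * p ^ (i0 + 1) = p ^ r := by rw [← pow_add]; congr 1; omega
            have h2 : p ^ k * (b + 1) = c + p ^ k := by rw [hcdef]; ring
            rcases Nat.eq_zero_or_pos k with hk0 | hk0
            · have e0 : p ^ k = 1 := by rw [hk0, pow_zero]
              have hce : c = b := by rw [hcdef, e0, one_mul]
              omega
            · have h3 : p ≤ p ^ k := Nat.le_self_pow (by omega) p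
              omega
          have hc2 : (p - 1) * c < p ^ r - 1 := by
            have h := hO2 k hkr
            rw [show p ^ k * b = c from hcdef.symm, Nat.mod_eq_of_lt hcN] at h
            exact h
          have hcne : c ≠ p ^ (r - 1) := by
            intro hceq
            have e : p ^ k * p ^ i0 = p ^ (r - 1) := by rw [← pow_add]; congr 1; omega
            have hbeq : b = p ^ i0 := by
              refine Nat.eq_of_mul_eq_mul_left hpk0 ?_
              rw [← hcdef]
              exact hceq.trans e.symm
            exact hbp i0 hi0r (by rw [hbeq])
          set e := c - p ^ (r - 1) with hedef
          have he1 : 1 ≤ e := by omega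
          have hce : c = p ^ (r - 1) + e := by omega
          have hpe2 : 2 * e ≤ (p - 1) * e := Nat.mul_le_mul_right e (by omega)
          have c4r : p * p ^ (r - 1) = p ^ r := by rw [← pow_succ']; congr 1; omega
          have he2 : e < p ^ (r - 1) := by
            have h1 : (p - 1) * c = (p - 1) * p ^ (r - 1) + (p - 1) * e := by
              rw [hce, mul_add]
            have h2 : (p - 1) * p ^ (r - 1) + p ^ (r - 1) = p ^ r :=
              stmt7aux_pred_mul p _ _ (by omega) c4r
            omega
          have hr3 : 3 ≤ r := by
            by_contra hcon
            have hre : r = 2 := by omega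
            have e1 : p ^ (r - 1) = p := by
              rw [hre, show (2 : ℕ) - 1 = 1 from rfl, pow_one]
            have h1 : (p - 1) * (p + 1) ≤ (p - 1) * c := Nat.mul_le_mul_left _ (by omega)
            have h2 : (p - 1) * (p + 1) + (p + 1) = p * p + p :=
              stmt7aux_pred_mul p _ _ (by omega) (by ring)
            have h3 : p * p = p ^ r := by rw [hre]; ring
            omega
          set t := Nat.log p e with htdef
          have ht1 : p ^ t ≤ e := by
            rw [htdef]; exact Nat.pow_log_le_self p (by omega)
          have ht2 : e < p ^ (t + 1) := by
            rw [htdef]; exact Nat.lt_pow_succ_log_self (by omega) e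
          have htr : t < r - 1 := by
            by_contra hcon
            push_neg at hcon
            have h : p ^ (r - 1) ≤ p ^ t := Nat.pow_le_pow_right (by omega) hcon
            omega
          set s := r - 1 - t with hsdef
          have hs1 : 1 ≤ s := by omega
          have hs2 : s ≤ r - 1 := by omega
          set v := p ^ s * e + p ^ (s - 1) with hvdef
          have hv_modeq : p ^ s * c ≡ v [MOD p ^ r - 1] := by
            have e1 : p ^ s * c = p ^ (s - 1) * p ^ r + p ^ s * e := by
              rw [hce, mul_add]
              congr 1
              rw [← pow_add, ← pow_add]
              congr 1
              omega
            have h2 : p ^ (s - 1) * 1 + p ^ s * e = v := by rw [hvdef]; ring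
            rw [e1, ← h2]
            exact Nat.ModEq.add_right _ (Nat.ModEq.mul_left _ hprmod)
          have hps_eq : p ^ s = p ^ (s - 1) * p := by rw [← pow_succ]; congr 1; omega
          have hps_r : p ^ s * p ^ t = p ^ (r - 1) := by rw [← pow_add]; congr 1; omega
          have hs1pos : 0 < p ^ (s - 1) := pow_pos (by omega) _
          have hvN : v < p ^ r - 1 := by
            have h1 : p ^ s * (e + 1) ≤ p ^ s * p ^ (t + 1) :=
              Nat.mul_le_mul_left _ (by omega)
            have h2 : p ^ s * p ^ (t + 1) = p ^ r := by rw [← pow_add]; congr 1; omega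
            have h3 : p ^ s * (e + 1) = p ^ s * e + p ^ s := by ring
            have h4 : p ^ (s - 1) * 3 ≤ p ^ (s - 1) * p := Nat.mul_le_mul_left _ hp3
            omega
          have hv1 : p ^ (r - 1) + 1 ≤ v := by
            have h1 : p ^ s * p ^ t ≤ p ^ s * e := Nat.mul_le_mul_left _ ht1
            omega
          set j2 := (k + s) % r with hj2
          have hj2r : j2 < r := Nat.mod_lt _ (by omega)
          have hj2k : j2 ≠ k := by
            rcases lt_or_ge (k + s) r with h | h
            · rw [hj2, Nat.mod_eq_of_lt h]; omega
            · rw [hj2, Nat.mod_eq_sub_mod h, Nat.mod_eq_of_lt (by omega)]; omega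
          have hvb : p ^ j2 * b ≡ v [MOD p ^ r - 1] := by
            have h1 : p ^ j2 ≡ p ^ (k + s) [MOD p ^ r - 1] := by
              have h := hpow_red (k + s)
              rw [← hj2] at h
              exact h.symm
            have h2 : p ^ j2 * b ≡ p ^ (k + s) * b [MOD p ^ r - 1] :=
              Nat.ModEq.mul_right b h1
            have h3 : p ^ (k + s) * b = p ^ s * c := by rw [hcdef, pow_add]; ring
            have h4 : p ^ (k + s) * b ≡ v [MOD p ^ r - 1] := by rw [h3]; exact hv_modeq
            exact h2.trans h4
          have hv2 : (p - 1) * v < p ^ r - 1 := by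
            have h := hO2 j2 hj2r
            rw [stmt7aux_mod_eq hvb hvN] at h
            exact h
          set hf := (p - 1) / 2 with hhf
          have hhfp : 2 * hf + 1 = p := by omega
          set n := hf * p ^ k + hf * p ^ j2 with hndef
          have hpk_le : p ^ k ≤ p ^ (r - 1) := Nat.pow_le_pow_right (by omega) (by omega)
          have hpj2_le : p ^ j2 ≤ p ^ (r - 1) := Nat.pow_le_pow_right (by omega) (by omega)
          have e2h : 2 * hf = p - 1 := by omega
          have e9 : 2 * (hf * c + hf * v) = (p - 1) * c + (p - 1) * v := by
            have h : 2 * (hf * c + hf * v) = (2 * hf) * c + (2 * hf) * v := by ring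
            rw [h, e2h]
          have huN : hf * c + hf * v < p ^ r - 1 := by omega
          have hu2 : p ^ r - 1 ≤ 2 * (hf * c + hf * v) := by
            have d1 : (p - 1) * (p ^ (r - 1) + 1) ≤ (p - 1) * c :=
              Nat.mul_le_mul_left _ (by omega)
            have d2 : (p - 1) * (p ^ (r - 1) + 1) ≤ (p - 1) * v :=
              Nat.mul_le_mul_left _ (by omega)
            have d3 : (p - 1) * (p ^ (r - 1) + 1) + (p ^ (r - 1) + 1) = p ^ r + p :=
              stmt7aux_pred_mul p _ _ (by omega) (by rw [mul_add, mul_one, c4r])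
            omega
          refine ⟨n, stmt7aux_condC_intro _ _ _ _ ?_ ?_ ?_, ?_⟩
          · have h : 0 < hf * p ^ k := Nat.mul_pos (by omega) hpk0
            omega
          · have hkj : p ^ k + p ^ j2 ≤ p ^ (r - 1) + p ^ (r - 2) := by
              rcases lt_or_gt_of_ne hj2k with h | h
              · have h1 : p ^ j2 ≤ p ^ (r - 2) := Nat.pow_le_pow_right (by omega) (by omega)
                omega
              · have h1 : p ^ k ≤ p ^ (r - 2) := Nat.pow_le_pow_right (by omega) (by omega)
                omega
            have c1 : 2 * n = (p - 1) * (p ^ k + p ^ j2) := by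
              have h : 2 * n = (2 * hf) * (p ^ k + p ^ j2) := by rw [hndef]; ring
              rw [h, e2h]
            have c2 : (p - 1) * (p ^ k + p ^ j2) ≤ (p - 1) * (p ^ (r - 1) + p ^ (r - 2)) :=
              Nat.mul_le_mul_left _ hkj
            have c5 : p * p ^ (r - 2) = p ^ (r - 1) := by rw [← pow_succ']; congr 1; omega
            have c3 : (p - 1) * (p ^ (r - 1) + p ^ (r - 2)) + (p ^ (r - 1) + p ^ (r - 2)) =
                p ^ r + p ^ (r - 1) :=
              stmt7aux_pred_mul p _ _ (by omega) (by rw [mul_add, c4r, c5])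
            have c6 : p ≤ p ^ (r - 2) := Nat.le_self_pow (by omega) p
            omega
          · intro i hi1 hi2
            have hd : 2 * hf < p := by omega
            rcases lt_or_gt_of_ne hj2k with h | h
            · have hdig := stmt7aux_digit_two p hf j2 k i hp3 hd h hi1
              have egoal : hf * p ^ k + hf * p ^ j2 = hf * p ^ j2 + hf * p ^ k := by ring
              rw [hndef, egoal]
              exact hdig
            · have hdig := stmt7aux_digit_two p hf k j2 i hp3 hd h hi1
              rw [hndef]
              exact hdig
          · have e5 : n * b = hf * (p ^ k * b) + hf * (p ^ j2 * b) := by rw [hndef]; ring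
            have h07 : hf * (p ^ k * b) + hf * (p ^ j2 * b) ≡ hf * c + hf * v
                [MOD p ^ r - 1] := by
              have h08 : hf * (p ^ k * b) = hf * c := by rw [hcdef]
              rw [h08]
              exact Nat.ModEq.add_left _ (Nat.ModEq.mul_left _ hvb)
            rw [e5, stmt7aux_mod_eq h07 huN]
            omega
end

section
/- Let q = p^r be odd, q ≠ 9, and suppose b = p^{m1} and c = p^{m2} with 0 ≤ m1 < m2 < r. Then n = (p+1)/2 does not satisfy condition C(n), but the pair (nb, nc) satisfies condition C(nb, nc): (nb mod (q−1)) + (nc mod (q−1)) < q−1 and the corresponding multinomial coefficient α_{nb,nc} is nonzero mod p. -/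
private lemma pow_sub_one_mod' (p s : ℕ) (hp : 1 ≤ p) (hs : 1 ≤ s) :
    (p ^ s - 1) % p = p - 1 := by
  have h1 : p ^ (s - 1) * p = p ^ s := by rw [← pow_succ]; congr 1; omega
  have h2 : 1 ≤ p ^ (s - 1) := Nat.one_le_pow _ _ (by omega)
  have h3 : p ≤ p ^ s := by nlinarith
  have key : p ^ s - 1 = p - 1 + (p ^ (s - 1) - 1) * p := by
    rw [Nat.sub_mul, one_mul, h1]; omega
  rw [key, Nat.add_mul_mod_self_right, Nat.mod_eq_of_lt (by omega)]

private lemma pow_sub_one_div' (p i r : ℕ) (hp : 1 ≤ p) (h : i ≤ r) :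
    (p ^ r - 1) / p ^ i = p ^ (r - i) - 1 := by
  have h1 : p ^ (r - i) * p ^ i = p ^ r := by rw [← pow_add]; congr 1; omega
  have h2 : 1 ≤ p ^ i := Nat.one_le_pow _ _ (by omega)
  have h3 : 1 ≤ p ^ (r - i) := Nat.one_le_pow _ _ (by omega)
  have h4 : p ^ i ≤ p ^ r := by nlinarith
  have key : p ^ r - 1 = p ^ i - 1 + (p ^ (r - i) - 1) * p ^ i := by
    rw [Nat.sub_mul, one_mul, h1]; omega
  rw [key, Nat.add_mul_div_right _ _ (by omega : 0 < p ^ i),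
    Nat.div_eq_of_lt (by omega), zero_add]

private lemma eq_zero_of_digits_zero (p : ℕ) (hp : 2 ≤ p) :
    ∀ k, (∀ i, k / p ^ i % p = 0) → k = 0 := by
  intro k
  induction k using Nat.strong_induction_on with
  | _ k ih =>
    intro h
    have h0 : k % p = 0 := by simpa using h 0
    by_contra hk
    have hlt : k / p < k := Nat.div_lt_self (by omega) (by omega)
    have hz : k / p = 0 := ih _ hlt (fun i => by
      rw [Nat.div_div_eq_div_mul, ← pow_succ']
      exact h (i + 1))
    have hdm := Nat.div_add_mod k p
    rw [hz, mul_zero, zero_add] at hdm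
    omega

private lemma not_dvd_choose_of_digits_le (p : ℕ) (hp : p.Prime) :
    ∀ n k, (∀ i, k / p ^ i % p ≤ n / p ^ i % p) → ¬ p ∣ Nat.choose n k := by
  haveI : Fact p.Prime := ⟨hp⟩
  intro n
  induction n using Nat.strong_induction_on with
  | _ n ih =>
    intro k hdig hdvd
    rcases Nat.eq_zero_or_pos n with hn | hn
    · subst hn
      have hk : k = 0 := eq_zero_of_digits_zero p hp.two_le k (fun i => by
        have := hdig i; simpa using this)
      subst hk
      exact hp.not_dvd_one (by simpa using hdvd)
    · have hmod := Choose.choose_modEq_choose_mod_mul_choose_div_nat (p := p) (n := n) (k := k)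
      have hprod : p ∣ Nat.choose (n % p) (k % p) * Nat.choose (n / p) (k / p) :=
        (Nat.modEq_zero_iff_dvd).mp
          (hmod.symm.trans ((Nat.modEq_zero_iff_dvd).mpr hdvd))
      rcases (Nat.Prime.dvd_mul hp).mp hprod with h1 | h1
      · have hk0 : k % p ≤ n % p := by simpa using hdig 0
        have hpos : 0 < Nat.choose (n % p) (k % p) := Nat.choose_pos hk0
        have hfz := Nat.factorization_choose_eq_zero_of_lt
          (p := p) (k := k % p) (Nat.mod_lt n hp.pos)
        have := Nat.Prime.factorization_pos_of_dvd hp (by omega) h1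
        omega
      · exact ih (n / p) (Nat.div_lt_self hn hp.one_lt) (k / p)
          (fun i => by
            rw [Nat.div_div_eq_div_mul, Nat.div_div_eq_div_mul, ← pow_succ']
            exact hdig (i + 1)) h1

private lemma digit_mul_pow' (p h m i : ℕ) (hp : 1 ≤ p) (hh : h < p) :
    h * p ^ m / p ^ i % p = if i = m then h else 0 := by
  have hpi : 0 < p ^ i := Nat.one_le_pow _ _ (by omega)
  rcases lt_trichotomy i m with hlt | rfl | hgt
  · rw [if_neg (by omega)]
    have e2 : p ^ (m - i - 1) * p * p ^ i = p ^ m := by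
      rw [← pow_succ, ← pow_add]
      congr 1
      omega
    have e : h * p ^ m = h * (p ^ (m - i - 1) * p) * p ^ i := by
      rw [mul_assoc, e2]
    rw [e, Nat.mul_div_cancel _ hpi, ← mul_assoc, Nat.mul_mod_left]
  · rw [if_pos rfl, Nat.mul_div_cancel _ hpi, Nat.mod_eq_of_lt hh]
  · rw [if_neg (by omega)]
    have e : h * p ^ m < p ^ i := by
      calc h * p ^ m < p * p ^ m := by
            have := Nat.one_le_pow m p (by omega)
            exact Nat.mul_lt_mul_of_lt_of_le hh le_rfl (by omega)
        _ = p ^ (m + 1) := by rw [pow_succ]; ring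
        _ ≤ p ^ i := Nat.pow_le_pow_right (by omega) (by omega)
    rw [Nat.div_eq_of_lt e, Nat.zero_mod]

/-- Let `q = p^r` be odd with `q ≠ 9`, and `b = p^{m₁}`, `c = p^{m₂}` with
`0 ≤ m₁ < m₂ < r`.  Then `n = (p+1)/2` does not satisfy `C(n)`, but the pair `(nb, nc)` satisfies
`C(nb, nc)`. -/
theorem stmt8 (p r q : ℕ) (hp : p.Prime) (hodd : Odd p) (hq : q = p ^ r) (hq9 : q ≠ 9)
    (m1 m2 : ℕ) (h12 : m1 < m2) (h2r : m2 < r) :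
    ¬ CondC p r q ((p + 1) / 2) ∧
      CondBC p q ((p + 1) / 2 * p ^ m1) ((p + 1) / 2 * p ^ m2) := by
  subst hq
  have hp2 : 2 ≤ p := hp.two_le
  have hpo : p % 2 = 1 := Nat.odd_iff.mp hodd
  have hp3 : 3 ≤ p := by omega
  have hr2 : 2 ≤ r := by omega
  set n := (p + 1) / 2 with hn
  have h2n : 2 * n = p + 1 := by omega
  -- basic power facts
  have e1 : p ^ m1 ≤ p ^ (r - 2) := Nat.pow_le_pow_right (by omega) (by omega)
  have e2 : p ^ m2 ≤ p ^ (r - 1) := Nat.pow_le_pow_right (by omega) (by omega)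
  have e3 : p ^ (r - 1) = p * p ^ (r - 2) := by rw [← pow_succ']; congr 1; omega
  have e4 : p ^ r = p * (p * p ^ (r - 2)) := by
    rw [← pow_succ', ← pow_succ']; congr 1; omega
  have e5 : 1 ≤ p ^ (r - 2) := Nat.one_le_pow _ _ (by omega)
  have hcase : 5 ≤ p ∨ (p = 3 ∧ 3 ≤ r) := by
    rcases Nat.lt_or_ge p 5 with h | h
    · have hp3' : p = 3 := by omega
      subst hp3'
      right
      refine ⟨rfl, ?_⟩
      by_contra hr
      have : r = 2 := by omega
      subst this
      norm_num at hq9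
    · exact Or.inl h
  -- sum bound
  have t1 : n * p ^ m1 ≤ n * p ^ (r - 2) := Nat.mul_le_mul_left _ e1
  have t2 : n * p ^ m2 ≤ n * p ^ (r - 1) := Nat.mul_le_mul_left _ e2
  have hbc1 : n * p ^ m1 + n * p ^ m2 + 1 < p ^ r := by
    have hmain : n * p ^ (r - 2) + n * (p * p ^ (r - 2)) + 1 < p * (p * p ^ (r - 2)) := by
      set A := p ^ (r - 2) with hA
      have k3 : 2 * (n * A) = p * A + A := by
        have : 2 * (n * A) = 2 * n * A := by ring
        rw [this, h2n]; ring
      have k4 : 2 * (n * (p * A)) = p * (p * A) + p * A := by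
        have : 2 * (n * (p * A)) = 2 * n * (p * A) := by ring
        rw [this, h2n]; ring
      rcases hcase with h5 | ⟨h3, hr3⟩
      · have k1 : 5 * (p * A) ≤ p * (p * A) := Nat.mul_le_mul_right _ h5
        have k2 : 5 * A ≤ p * A := Nat.mul_le_mul_right _ h5
        linarith
      · have e6 : 3 ≤ A := by
          rw [hA]
          calc (3 : ℕ) = p ^ 1 := by rw [h3, pow_one]
            _ ≤ p ^ (r - 2) := Nat.pow_le_pow_right (by omega) (by omega)
        have hn2 : n = 2 := by omega
        rw [hn2, h3]
        omega
    rw [e3] at t2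
    rw [e4]
    omega
  have hpow1 : 1 ≤ p ^ r := Nat.one_le_pow _ _ (by omega)
  constructor
  · rintro ⟨-, -, hC⟩
    have h1 := hC 1 le_rfl (by omega)
    rw [pow_one] at h1
    have hnp : n % p = n := Nat.mod_eq_of_lt (by omega)
    omega
  · have hbm : n * p ^ m1 % (p ^ r - 1) = n * p ^ m1 := Nat.mod_eq_of_lt (by omega)
    have hcm : n * p ^ m2 % (p ^ r - 1) = n * p ^ m2 := Nat.mod_eq_of_lt (by omega)
    constructor
    · rw [hbm, hcm]; omega
    · rw [hbm, hcm]
      set b := n * p ^ m1 with hb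
      set c := n * p ^ m2 with hc
      have hbN : b ≤ p ^ r - 1 := by omega
      have hcN : c ≤ p ^ r - 1 - b := by omega
      have A := Nat.choose_mul_factorial_mul_factorial hbN
      have B := Nat.choose_mul_factorial_mul_factorial hcN
      have hid : (p ^ r - 1).factorial =
          Nat.choose (p ^ r - 1) b * Nat.choose (p ^ r - 1 - b) c *
            (b.factorial * c.factorial * (p ^ r - 1 - b - c).factorial) := by
        rw [← A, ← B]; ring
      rw [hid, Nat.mul_div_cancel _
        (Nat.mul_pos (Nat.mul_pos b.factorial_pos c.factorial_pos)
          (p ^ r - 1 - b - c).factorial_pos)]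
      intro hd
      rcases (Nat.Prime.dvd_mul hp).mp hd with h1 | h1
      · refine not_dvd_choose_of_digits_le p hp (p ^ r - 1) b ?_ h1
        intro i
        rw [hb, digit_mul_pow' p n m1 i (by omega) (by omega)]
        split_ifs with hi
        · rw [hi]
          rw [pow_sub_one_div' p m1 r (by omega) (by omega),
            pow_sub_one_mod' p (r - m1) (by omega) (by omega)]
          omega
        · exact Nat.zero_le _
      · refine not_dvd_choose_of_digits_le p hp (p ^ r - 1 - b) c ?_ h1
        intro i
        rw [hc, digit_mul_pow' p n m2 i (by omega) (by omega)]
        split_ifs with hi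
        · rw [hi]
          have hb1 : b + 1 ≤ p ^ m2 := by
            have : b < p * p ^ m1 := by
              have := Nat.one_le_pow m1 p (by omega)
              rw [hb]
              exact Nat.mul_lt_mul_of_lt_of_le (by omega) le_rfl (by omega)
            have h11 : p * p ^ m1 = p ^ (m1 + 1) := by rw [pow_succ]; ring
            have h12' : p ^ (m1 + 1) ≤ p ^ m2 := Nat.pow_le_pow_right (by omega) (by omega)
            omega
          have h1' : p ^ (r - m2) * p ^ m2 = p ^ r := by rw [← pow_add]; congr 1; omega
          have h2' : 1 ≤ p ^ m2 := Nat.one_le_pow _ _ (by omega)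
          have h3' : 1 ≤ p ^ (r - m2) := Nat.one_le_pow _ _ (by omega)
          have h4' : p ^ m2 ≤ p ^ r := Nat.pow_le_pow_right (by omega) (by omega)
          have key : p ^ r - 1 - b = p ^ m2 - 1 - b + (p ^ (r - m2) - 1) * p ^ m2 := by
            rw [Nat.sub_mul, one_mul, h1']; omega
          rw [key, Nat.add_mul_div_right _ _ (by omega : 0 < p ^ m2),
            Nat.div_eq_of_lt (by omega), zero_add,
            pow_sub_one_mod' p (r - m2) (by omega) (by omega)]
          omega
        · exact Nat.zero_le _
end

section
/- For any field k and any n ≥ 1, the subfield of k(x_1,...,x_n) generated by all power sums p_1, p_2, p_3, ... equals the subfield generated by the elementary symmetric functions e_1,...,e_n. -/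
open MvPolynomial Finset

section Aux

variable (k : Type*) [Field k] (n : ℕ)

theorem stmt14_esymm_gt_card (j : ℕ) (hj : n < j) : esymm (Fin n) k j = 0 := by
  rw [esymm, Finset.powersetCard_eq_empty.mpr (by simpa using hj), Finset.sum_empty]

theorem stmt14_newton_high (j : ℕ) (hj : n < j) :
    ∑ i ∈ Finset.range (n + 1),
      (-1 : MvPolynomial (Fin n) k) ^ i * esymm (Fin n) k i * psum (Fin n) k (j - i) = 0 := by
  have h := MvPolynomial.mul_esymm_eq_sum (Fin n) k j
  rw [stmt14_esymm_gt_card k n j hj, mul_zero, eq_comm, neg_one_pow_mul_eq_zero_iff] at h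
  have hfull : ∑ a ∈ antidiagonal j,
      (-1 : MvPolynomial (Fin n) k) ^ a.1 * esymm (Fin n) k a.1 * psum (Fin n) k a.2 = 0 := by
    rw [← Finset.sum_filter_add_sum_filter_not (antidiagonal j) (fun a => a.1 < j), h, zero_add]
    refine Finset.sum_eq_zero fun a ha => ?_
    simp only [mem_filter, HasAntidiagonal.mem_antidiagonal, not_lt] at ha
    rw [stmt14_esymm_gt_card k n a.1 (by omega), mul_zero, zero_mul]
  rw [Finset.Nat.sum_antidiagonal_eq_sum_range_succ_mk] at hfull
  rw [← hfull]
  refine Finset.sum_subset (Finset.range_subset_range.mpr (by omega)) fun i hi hni => ?_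
  simp only [mem_range, not_lt] at hi hni
  rw [stmt14_esymm_gt_card k n i (by omega), mul_zero, zero_mul]

theorem stmt14_det_psum_ne_zero :
    (Matrix.of fun r c : Fin n => psum (Fin n) k (n + r - c)).det ≠ 0 := by
  classical
  set R := MvPolynomial (Fin n) k
  set V : Matrix (Fin n) (Fin n) R := Matrix.vandermonde (fun i => (X i : R)) with hV
  have hdetV : V.det ≠ 0 :=
    Matrix.det_vandermonde_ne_zero_iff.mpr (MvPolynomial.X_injective)
  set A : Matrix (Fin n) (Fin n) R := Matrix.of fun r j => (X j : R) ^ (r.1 + 1) with hA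
  set B : Matrix (Fin n) (Fin n) R := Matrix.of fun j c => (X j : R) ^ (n - 1 - c.1) with hB
  have hfact : (Matrix.of fun r c : Fin n => psum (Fin n) k (n + r - c)) = A * B := by
    refine Matrix.ext fun r c => ?_
    show psum (Fin n) k (n + r - c) = _
    rw [psum]
    simp only [Matrix.mul_apply, Matrix.of_apply, hA, hB, ← pow_add]
    refine Finset.sum_congr rfl fun j _ => ?_
    congr 1
    have := c.2
    omega
  have hdetA : A.det = (∏ j, (X j : R)) * V.det := by
    rw [← Matrix.det_transpose A]
    have : A.transpose = Matrix.of fun j r => (X j : R) * V j r := by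
      ext j r
      simp [hA, hV, Matrix.vandermonde, pow_succ, mul_comm]
    rw [this]
    have := Matrix.det_mul_column (fun j => (X j : R)) V
    rw [← this]
  have hdetB : B.det = (Equiv.Perm.sign (Fin.revPerm (n := n)) : ℤ) * V.det := by
    have : B = V.submatrix id (Fin.revPerm (n := n)) := by
      refine Matrix.ext fun j c => ?_
      simp only [hB, hV, Matrix.submatrix_apply, Matrix.vandermonde, Matrix.of_apply, id_eq,
        Fin.revPerm_apply, Fin.val_rev]
      congr 1
      omega
    rw [this, Matrix.det_permute']
  rw [hfact, Matrix.det_mul, hdetA, hdetB]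
  have hX : (∏ j, (X j : R)) ≠ 0 :=
    Finset.prod_ne_zero_iff.mpr fun j _ => MvPolynomial.X_ne_zero j
  have hsign : ((Equiv.Perm.sign (Fin.revPerm (n := n)) : ℤ) : R) ≠ 0 := by
    rcases Int.units_eq_one_or (Equiv.Perm.sign (Fin.revPerm (n := n))) with h | h <;>
      rw [h] <;> simp
  exact mul_ne_zero (mul_ne_zero hX hdetV) (mul_ne_zero hsign hdetV)

end Aux

set_option maxHeartbeats 1000000 in
/-- For any field `k` and `n ≥ 1`, the subfield of `k(x₁,…,xₙ)` generated over
`k` by all the power sums `p₁, p₂, p₃, …` equals the subfield generated over `k` by the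
elementary symmetric functions `e₁, …, eₙ`. -/
theorem stmt14 (k : Type*) [Field k] (n : ℕ) (hn : 1 ≤ n) :
    IntermediateField.adjoin k
        (Set.range fun j : ℕ =>
          algebraMap (MvPolynomial (Fin n) k) (FractionRing (MvPolynomial (Fin n) k))
            (psum (Fin n) k (j + 1))) =
      IntermediateField.adjoin k
        (Set.range fun i : Fin n =>
          algebraMap (MvPolynomial (Fin n) k) (FractionRing (MvPolynomial (Fin n) k))
            (esymm (Fin n) k (i + 1))) := by
  classical
  set R := MvPolynomial (Fin n) k
  set F := FractionRing R
  set φ : R →+* F := algebraMap R F with hφ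
  have hφinj : Function.Injective φ := IsFractionRing.injective R F
  set ψ : R →ₐ[k] F := IsScalarTower.toAlgHom k R F with hψ
  have hψφ : ∀ x : R, ψ x = φ x := fun x => rfl
  set K := IntermediateField.adjoin k
      (Set.range fun j : ℕ => φ (psum (Fin n) k (j + 1))) with hK
  set K' := IntermediateField.adjoin k
      (Set.range fun i : Fin n => φ (esymm (Fin n) k (i + 1))) with hK'
  apply le_antisymm
  · -- power sums are polynomials in the elementary symmetric functions
    rw [IntermediateField.adjoin_le_iff]
    rintro - ⟨j, rfl⟩
    obtain ⟨q, hq⟩ := MvPolynomial.esymmAlgHom_surjective (σ := Fin n) (R := k) (n := n)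
      (by simp) ⟨psum (Fin n) k (j + 1), psum_isSymmetric (Fin n) k (j + 1)⟩
    have hq' : aeval (fun i : Fin n => esymm (Fin n) k (i + 1)) q = psum (Fin n) k (j + 1) := by
      have := congrArg Subtype.val hq
      rwa [MvPolynomial.esymmAlgHom_apply] at this
    have : φ (psum (Fin n) k (j + 1))
        = aeval (fun i : Fin n => φ (esymm (Fin n) k (i + 1))) q := by
      rw [← hq', ← hψφ, MvPolynomial.comp_aeval_apply]
      simp [hψφ]
    show φ (psum (Fin n) k (j + 1)) ∈ K'
    rw [this]
    apply IntermediateField.algebra_adjoin_le_adjoin k _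
    rw [Algebra.adjoin_range_eq_range_aeval]
    exact ⟨q, rfl⟩
  · -- elementary symmetric functions are rational functions of the power sums
    rw [IntermediateField.adjoin_le_iff]
    rintro - ⟨c, rfl⟩
    have hmem : ∀ m : ℕ, 1 ≤ m → φ (psum (Fin n) k m) ∈ K := by
      intro m hm
      obtain ⟨j, rfl⟩ : ∃ j, m = j + 1 := ⟨m - 1, by omega⟩
      exact IntermediateField.subset_adjoin _ _ ⟨j, rfl⟩
    set HK : Matrix (Fin n) (Fin n) K :=
      Matrix.of fun r c => (⟨φ (psum (Fin n) k (n + r - c)),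
        hmem _ (by have := c.2; omega)⟩ : K) with hHK
    set bK : Fin n → K := fun r => ⟨φ (psum (Fin n) k (n + 1 + r)), hmem _ (by omega)⟩ with hbK
    set ι : K →ₐ[k] F := K.val with hι
    set H : Matrix (Fin n) (Fin n) F :=
      Matrix.of fun r c => φ (psum (Fin n) k (n + r - c)) with hH
    set b : Fin n → F := fun r => φ (psum (Fin n) k (n + 1 + r)) with hb
    have hHKmap : HK.map ι = H := rfl
    have hdetH : H.det ≠ 0 := by
      have h1 := φ.map_det (Matrix.of fun r c : Fin n => psum (Fin n) k (n + r - c))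
      have h2 : φ.mapMatrix (Matrix.of fun r c : Fin n => psum (Fin n) k (n + r - c)) = H := rfl
      rw [h2] at h1
      rw [← h1]
      exact fun h => stmt14_det_psum_ne_zero k n (hφinj (h.trans (map_zero φ).symm))
    have hdetHK : IsUnit HK.det := by
      rw [isUnit_iff_ne_zero]
      intro h
      apply hdetH
      have h1 : ι HK.det = (ι.toRingHom.mapMatrix HK).det := ι.toRingHom.map_det HK
      have h2 : ι.toRingHom.mapMatrix HK = H := hHKmap
      rw [h2] at h1
      rw [← h1, h, map_zero]
    -- the K-side solution
    set w : Fin n → K := HK⁻¹.mulVec (-bK) with hw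
    have hKeq : HK.mulVec w = -bK := by
      rw [hw, Matrix.mulVec_mulVec, Matrix.mul_nonsing_inv _ hdetHK, Matrix.one_mulVec]
    have hFeq : H.mulVec (fun c => ι (w c)) = -b := by
      funext r
      have := congrFun hKeq r
      have h2 := congrArg ι this
      simp only [Matrix.mulVec, dotProduct, map_sum, map_mul, Pi.neg_apply, map_neg] at h2 ⊢
      exact h2
    -- the Newton solution
    set v : Fin n → F := fun c => (-1 : F) ^ (c.1 + 1) * φ (esymm (Fin n) k (c + 1)) with hv
    have hNewton : H.mulVec v = -b := by
      funext r
      have h0 := congrArg φ (stmt14_newton_high k n (n + 1 + r) (by omega))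
      rw [map_sum, map_zero] at h0
      rw [Finset.sum_range_succ'] at h0
      simp only [map_mul, map_pow, map_neg, map_one, esymm_zero, pow_zero, one_mul] at h0
      rw [Finset.sum_range (fun i => ((-1 : F)) ^ (i + 1) * φ (esymm (Fin n) k (i + 1)) *
        φ (psum (Fin n) k (n + 1 + r - (i + 1))))] at h0
      have hre : ∀ c : Fin n, H r c * v c =
          (-1 : F) ^ (c.1 + 1) * φ (esymm (Fin n) k (c + 1)) *
            φ (psum (Fin n) k (n + 1 + r - (c.1 + 1))) := by
        intro c
        have hidx : n + 1 + r.1 - (c.1 + 1) = n + r.1 - c.1 := by omega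
        rw [hidx]
        simp only [hH, hv, Matrix.of_apply]
        ring
      simp only [Matrix.mulVec, dotProduct]
      calc ∑ c, H r c * v c
          = ∑ c : Fin n, (-1 : F) ^ (c.1 + 1) * φ (esymm (Fin n) k (c + 1)) *
            φ (psum (Fin n) k (n + 1 + r - (c.1 + 1))) := Finset.sum_congr rfl fun c _ => hre c
        _ = -b r := by
            simp only [Nat.sub_zero] at h0
            simp only [Pi.neg_apply, hb]
            linear_combination h0
    -- uniqueness: v = ι ∘ w
    have hdetH' : IsUnit H.det := isUnit_iff_ne_zero.mpr hdetH
    have huniq : (fun c => ι (w c)) = v := by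
      have h1 : H⁻¹.mulVec (H.mulVec (fun c => ι (w c))) = H⁻¹.mulVec (H.mulVec v) := by
        rw [hFeq, hNewton]
      rwa [Matrix.mulVec_mulVec, Matrix.mulVec_mulVec, Matrix.nonsing_inv_mul _ hdetH',
        Matrix.one_mulVec, Matrix.one_mulVec] at h1
    -- conclude
    have hvc : v c ∈ K := by
      rw [← huniq]
      exact (w c).2
    have hsq : (-1 : F) ^ (c.1 + 1) * v c = φ (esymm (Fin n) k (c + 1)) := by
      rw [hv]
      simp only [← mul_assoc, ← pow_add]
      rw [Even.neg_one_pow ⟨c.1 + 1, by ring⟩, one_mul]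
    show φ (esymm (Fin n) k (c + 1)) ∈ (K : Set F)
    rw [← hsq]
    exact mul_mem (pow_mem (neg_mem (one_mem K)) _) hvc
end

section
/- Let k be a field of characteristic p > 0, and let α_1,...,α_r ∈ k be distinct elements with multiplicities n_1,...,n_r satisfying 1 ≤ n_i < p. Let β_1,...,β_n (n = Σ n_i) be the list with α_i repeated n_i times, and similarly α'_1,...,α'_s with multiplicities n'_j < p giving β'_1,...,β'_n. If Σ_i n_i α_i^j = Σ_i n'_i (α'_i)^j for all j ≥ 1, then the multisets {β_1,...,β_n} and {β'_1,...,β'_n} are equal; in particular the values e_j(β_1,...,β_n) = e_j(β'_1,...,β'_n) for all 1 ≤ j ≤ n. -/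
open Polynomial Finset

private lemma stmt15_aux (k : Type*) [Field k] [DecidableEq k]
    (M : Multiset k) (A : Finset k) (hMA : M.toFinset ⊆ A) (j : ℕ) :
    (M.map (· ^ j)).sum = ∑ x ∈ A, (M.count x : k) * x ^ j := by
  rw [Finset.sum_multiset_map_count]
  rw [Finset.sum_subset hMA]
  · exact Finset.sum_congr rfl fun x _ => by rw [nsmul_eq_mul]
  · intro x _ hx
    simp [Multiset.count_eq_zero_of_notMem (by simpa using hx)]

/-- Let `k` be a field of characteristic `p > 0` and let `S, T` be multisets
of elements of `k` of the same cardinality `n` in which every element occurs with multiplicity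
less than `p` (i.e. lists `β₁,…,β_n` built from distinct `α_i` with multiplicities `1 ≤ n_i < p`).
If the power sums agree, `Σ β_i^j = Σ β'_i^j` for all `j ≥ 1`, then the multisets are equal;
in particular all the elementary symmetric functions of the two lists agree. -/
theorem stmt15 (k : Type*) [Field k] [DecidableEq k] (p : ℕ) [Fact p.Prime] [CharP k p]
    (S T : Multiset k) (hcard : Multiset.card S = Multiset.card T)
    (hS : ∀ x, S.count x < p) (hT : ∀ x, T.count x < p)
    (h : ∀ j : ℕ, 1 ≤ j → (S.map (· ^ j)).sum = (T.map (· ^ j)).sum) :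
    S = T := by
  classical
  set A : Finset k := S.toFinset ∪ T.toFinset with hA
  set c : k → k := fun x => (S.count x : k) - (T.count x : k) with hc
  -- power sums over A are equal for every j
  have hsum : ∀ j : ℕ, ∑ x ∈ A, c x * x ^ j = 0 := by
    intro j
    have hSsum := stmt15_aux k S A Finset.subset_union_left j
    have hTsum := stmt15_aux k T A Finset.subset_union_right j
    have key : ∑ x ∈ A, (S.count x : k) * x ^ j = ∑ x ∈ A, (T.count x : k) * x ^ j := by
      rcases Nat.eq_zero_or_pos j with hj | hj
      · subst hj
        rw [← hSsum, ← hTsum]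
        simp [hcard]
      · rw [← hSsum, ← hTsum, h j hj]
    simp only [hc, sub_mul]
    rw [Finset.sum_sub_distrib, key, sub_self]
  -- hence the linear functional kills every polynomial
  have hpoly : ∀ P : k[X], ∑ x ∈ A, c x * P.eval x = 0 := by
    intro P
    have : ∀ x : k, P.eval x = ∑ j ∈ Finset.range (P.natDegree + 1), P.coeff j * x ^ j :=
      fun x => P.eval_eq_sum_range x
    simp_rw [this, Finset.mul_sum]
    rw [Finset.sum_comm]
    refine Finset.sum_eq_zero fun j _ => ?_
    have : ∑ x ∈ A, c x * (P.coeff j * x ^ j) = P.coeff j * ∑ x ∈ A, c x * x ^ j := by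
      rw [Finset.mul_sum]
      exact Finset.sum_congr rfl fun x _ => by ring
    rw [this, hsum j, mul_zero]
  -- evaluate at Lagrange basis polynomials to conclude c = 0 on A
  have hczero : ∀ x ∈ A, c x = 0 := by
    intro x₀ hx₀
    have hinj : Set.InjOn (id : k → k) A := fun a _ b _ hab => hab
    have h1 : (Lagrange.basis A id x₀).eval x₀ = 1 := by
      simpa using Lagrange.eval_basis_self hinj hx₀
    have := hpoly (Lagrange.basis A id x₀)
    rw [Finset.sum_eq_single x₀] at this
    · rwa [h1, mul_one] at this
    · intro y hy hyx
      have h0 : (Lagrange.basis A id x₀).eval y = 0 := by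
        simpa using Lagrange.eval_basis_of_ne (s := A) (v := id) (Ne.symm hyx) hy
      rw [h0, mul_zero]
    · intro hx; exact absurd hx₀ hx
  -- counts agree
  have hcount : ∀ x : k, S.count x = T.count x := by
    intro x
    by_cases hx : x ∈ A
    · have h0 := hczero x hx
      rw [hc] at h0
      have : (S.count x : k) = (T.count x : k) := by
        have := sub_eq_zero.mp h0
        exact this
      exact CharP.natCast_injOn_Iio k p (hS x) (hT x) this
    · rw [hA, Finset.mem_union, not_or] at hx
      rw [Multiset.count_eq_zero_of_notMem (fun hm => hx.1 (Multiset.mem_toFinset.mpr hm)),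
        Multiset.count_eq_zero_of_notMem (fun hm => hx.2 (Multiset.mem_toFinset.mpr hm))]
  exact Multiset.ext.mpr hcount
end

section
/- Let k = F_q be a finite field of characteristic p, and β_1,...,β_n, β'_1,...,β'_n ∈ F_q with each element occurring with multiplicity < p in each list. If Σ_i β_i^j = Σ_i (β'_i)^j for j = 1, ..., q−1, then the two multisets are equal. -/
lemma ms_sum_swap {F : Type*} [CommRing F] (S : Multiset F) (s : Finset ℕ)
    (g : ℕ → F → F) :
    (S.map fun x => ∑ j ∈ s, g j x).sum = ∑ j ∈ s, (S.map (g j)).sum := by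
  induction S using Multiset.induction with
  | empty => simp
  | cons a S ih => simp [ih, Finset.sum_add_distrib]

/-- Let `F_q` be a finite field of characteristic `p` and let `S, T` be
multisets of elements of `F_q` of the same cardinality in which every element occurs with
multiplicity less than `p`.  If the power sums `Σ β_i^j` agree for `j = 1, …, q-1`, then the
two multisets are equal. -/
theorem stmt16 (p q : ℕ) (hp : p.Prime) (F : Type*) [Field F] [Fintype F] [DecidableEq F]
    [CharP F p] (hcard : Fintype.card F = q)
    (S T : Multiset F) (hcard' : Multiset.card S = Multiset.card T)
    (hS : ∀ x, S.count x < p) (hT : ∀ x, T.count x < p)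
    (h : ∀ j : ℕ, 1 ≤ j → j ≤ q - 1 → (S.map (· ^ j)).sum = (T.map (· ^ j)).sum) :
    S = T := by
  have hq2 : 2 ≤ q := hcard ▸ Fintype.one_lt_card
  -- power sums agree for all j ≤ q - 1 (including j = 0)
  have hall : ∀ j ≤ q - 1, (S.map (· ^ j)).sum = (T.map (· ^ j)).sum := by
    intro j hj
    rcases Nat.eq_zero_or_pos j with rfl | hj1
    · simp only [pow_zero]
      rw [Multiset.map_const', Multiset.map_const', Multiset.sum_replicate,
        Multiset.sum_replicate, hcard']
    · exact h j hj1 hj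
  -- key: for each a, sums of (x-a)^(q-1) agree
  have key : ∀ a : F, (S.map fun x => (x - a) ^ (q - 1)).sum
      = (T.map fun x => (x - a) ^ (q - 1)).sum := by
    intro a
    have hexp : ∀ x : F, (x - a) ^ (q - 1) =
        ∑ j ∈ Finset.range (q - 1 + 1),
          (-1) ^ (j + (q - 1)) * x ^ j * a ^ (q - 1 - j) * (q - 1).choose j := by
      intro x; exact sub_pow x a (q - 1)
    calc (S.map fun x => (x - a) ^ (q - 1)).sum
        = ∑ j ∈ Finset.range (q - 1 + 1),
            (S.map fun x => (-1) ^ (j + (q - 1)) * x ^ j * a ^ (q - 1 - j)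
              * (q - 1).choose j).sum := by
          rw [← ms_sum_swap]; exact congrArg _ (Multiset.map_congr rfl fun x _ => hexp x)
      _ = ∑ j ∈ Finset.range (q - 1 + 1),
            (T.map fun x => (-1) ^ (j + (q - 1)) * x ^ j * a ^ (q - 1 - j)
              * (q - 1).choose j).sum := by
          refine Finset.sum_congr rfl fun j hj => ?_
          have hj' : j ≤ q - 1 := by
            simpa [Nat.lt_succ_iff] using Finset.mem_range.mp hj
          have : ∀ (U : Multiset F),
              (U.map fun x => (-1) ^ (j + (q - 1)) * x ^ j * a ^ (q - 1 - j)
                * (q - 1).choose j).sum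
              = (-1) ^ (j + (q - 1)) * (U.map (· ^ j)).sum * a ^ (q - 1 - j)
                * (q - 1).choose j := by
            intro U
            induction U using Multiset.induction with
            | empty => simp
            | cons b U ih => simp [ih]; ring
          rw [this S, this T, hall j hj']
      _ = (T.map fun x => (x - a) ^ (q - 1)).sum := by
          rw [← ms_sum_swap]; exact congrArg _ (Multiset.map_congr rfl fun x _ => (hexp x).symm)
  -- evaluate the sums: (x-a)^(q-1) = 1 - indicator(x = a)
  have heval : ∀ (U : Multiset F) (a : F),
      (U.map fun x => (x - a) ^ (q - 1)).sum
        = (Multiset.card U : F) - (U.count a : F) := by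
    intro U a
    have hpt : ∀ x : F, (x - a) ^ (q - 1) = 1 - (if x = a then (1 : F) else 0) := by
      intro x
      by_cases hx : x = a
      · have : q - 1 ≠ 0 := by omega
        simp [hx, zero_pow this]
      · have hne : x - a ≠ 0 := sub_ne_zero.mpr hx
        rw [← hcard] at *
        simp [hx, FiniteField.pow_card_sub_one_eq_one _ hne]
    calc (U.map fun x => (x - a) ^ (q - 1)).sum
        = (U.map fun x => 1 - (if x = a then (1 : F) else 0)).sum := by
          congr 1; exact Multiset.map_congr rfl fun x _ => hpt x
      _ = (Multiset.card U : F) - (U.count a : F) := by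
          induction U using Multiset.induction with
          | empty => simp
          | cons b U ih =>
            simp only [Multiset.map_cons, Multiset.sum_cons, ih, Multiset.count_cons,
              Multiset.card_cons]
            by_cases hb : b = a
            · simp only [hb, if_pos rfl]; push_cast; ring
            · simp only [if_neg hb, if_neg (Ne.symm hb)]; push_cast; ring
  -- conclude count equality
  ext a
  have := key a
  rw [heval, heval, hcard'] at this
  have hcF : (S.count a : F) = (T.count a : F) := by linear_combination -this
  exact CharP.natCast_injOn_Iio F p (hS a) (hT a) hcF
end
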